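/- arXiv:1812.10995 — 7 statements merged into one kernel-verified Lean document; each statement's English description precedes it below -/
import Mathlib

section
/- Let f : ℝⁿ → ℝ be C² with the maximum eigenvalue of -∇²f(x) bounded above by λ̄ for all x, and let z : ℝ → ℝⁿ be any continuous external signal. If k > λ̄, then any two solutions xⁱ, xʲ of the coupled gradient system ẋ = -∇f(x) + k(z(t) - x) converge to each other exponentially: ‖xⁱ(t) - xʲ(t)‖ ≤ e^{-(k-λ̄)t} ‖xⁱ(0) - xʲ(0)‖. -/
open scoped RealInnerProductSpace

/-- If the largest eigenvalue of `-∇²f(x)` is bounded above by `λ̄` for all `x`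
(i.e. `⟪v, ∇²f(x) v⟫ ≥ -λ̄‖v‖²`) and `k > λ̄`, then any two solutions of the
coupled gradient system `ẋ = -∇f(x) + k(z(t) - x)` synchronize exponentially
with rate `k - λ̄`. -/
theorem stmt_1 (n : ℕ) (f : EuclideanSpace ℝ (Fin n) → ℝ) (lam k : ℝ)
    (hf : ContDiff ℝ 2 f)
    (hHess : ∀ x v : EuclideanSpace ℝ (Fin n),
      -lam * ‖v‖ ^ 2 ≤ ⟪v, fderiv ℝ (gradient f) x v⟫)
    (hk : lam < k)
    (z : ℝ → EuclideanSpace ℝ (Fin n)) (hz : Continuous z)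
    (xi xj : ℝ → EuclideanSpace ℝ (Fin n))
    (hxi : ∀ t : ℝ, HasDerivAt xi (-gradient f (xi t) + k • (z t - xi t)) t)
    (hxj : ∀ t : ℝ, HasDerivAt xj (-gradient f (xj t) + k • (z t - xj t)) t) :
    ∀ t : ℝ, 0 ≤ t →
      ‖xi t - xj t‖ ≤ Real.exp (-(k - lam) * t) * ‖xi 0 - xj 0‖ := by
  -- Differentiability of the gradient
  have hgd : Differentiable ℝ (gradient f) := by
    have hf' : ContDiff ℝ 1 (fderiv ℝ f) := hf.fderiv_right (by norm_num)
    have : gradient f = fun x => (InnerProductSpace.toDual ℝ _).symm (fderiv ℝ f x) := rfl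
    rw [this]
    exact (InnerProductSpace.toDual ℝ _).symm.toContinuousLinearEquiv.differentiable.comp
      (hf'.differentiable one_ne_zero)
  -- one-sided monotonicity of the gradient
  have key : ∀ a b : EuclideanSpace ℝ (Fin n),
      -lam * ‖a - b‖ ^ 2 ≤ ⟪a - b, gradient f a - gradient f b⟫ := by
    intro a b
    set u : EuclideanSpace ℝ (Fin n) := a - b with hu
    set g : ℝ → ℝ := fun s => ⟪u, gradient f (b + s • u)⟫ + lam * ‖u‖ ^ 2 * s with hg
    have hgderiv : ∀ s : ℝ, HasDerivAt g
        (⟪u, fderiv ℝ (gradient f) (b + s • u) u⟫ + lam * ‖u‖ ^ 2) s := by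
      intro s
      have h1 : HasDerivAt (fun s : ℝ => b + s • u) u s := by
        simpa using ((hasDerivAt_id s).smul_const u).const_add b
      have h2 : HasDerivAt (fun s : ℝ => gradient f (b + s • u))
          (fderiv ℝ (gradient f) (b + s • u) u) s :=
        (hgd _).hasFDerivAt.comp_hasDerivAt s h1
      have h3 := (hasDerivAt_const s u).inner ℝ h2
      simp only [inner_zero_left, add_zero] at h3
      have h4 : HasDerivAt (fun s : ℝ => lam * ‖u‖ ^ 2 * s) (lam * ‖u‖ ^ 2) s := by
        simpa using (hasDerivAt_id s).const_mul (lam * ‖u‖ ^ 2)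
      exact h3.add h4
    have hmono : Monotone g := by
      refine monotone_of_deriv_nonneg (fun s => (hgderiv s).differentiableAt) (fun s => ?_)
      rw [(hgderiv s).deriv]
      have := hHess (b + s • u) u
      linarith
    have h01 := hmono (show (0:ℝ) ≤ 1 by norm_num)
    have e0 : g 0 = ⟪u, gradient f b⟫ := by simp [hg]
    have e1 : g 1 = ⟪u, gradient f a⟫ + lam * ‖u‖ ^ 2 := by
      have hba : b + (1:ℝ) • u = a := by simp [hu]
      simp only [hg, hba, mul_one]
    rw [e0, e1] at h01
    rw [inner_sub_right]
    linarith
  -- the error signal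
  set e : ℝ → EuclideanSpace ℝ (Fin n) := fun t => xi t - xj t with he
  have hed : ∀ t : ℝ, HasDerivAt e
      (-(gradient f (xi t) - gradient f (xj t)) - k • e t) t := by
    intro t
    have := (hxi t).sub (hxj t)
    refine this.congr_deriv ?_
    simp only [he, smul_sub]
    abel
  -- squared norm
  set V : ℝ → ℝ := fun t => ⟪e t, e t⟫ with hV
  have hVd : ∀ t : ℝ, HasDerivAt V
      (2 * ⟪e t, -(gradient f (xi t) - gradient f (xj t)) - k • e t⟫) t := by
    intro t
    have := (hed t).inner ℝ (hed t)
    refine this.congr_deriv ?_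
    rw [real_inner_comm]
    ring
  -- weighted function
  set W : ℝ → ℝ := fun t => Real.exp (2 * (k - lam) * t) * V t with hW
  have hWd : ∀ t : ℝ, HasDerivAt W
      (Real.exp (2 * (k - lam) * t) * (2 * (k - lam)) * V t
        + Real.exp (2 * (k - lam) * t)
          * (2 * ⟪e t, -(gradient f (xi t) - gradient f (xj t)) - k • e t⟫)) t := by
    intro t
    have hexp : HasDerivAt (fun t : ℝ => Real.exp (2 * (k - lam) * t))
        (Real.exp (2 * (k - lam) * t) * (2 * (k - lam))) t := by
      simpa using ((hasDerivAt_id t).const_mul (2 * (k - lam))).exp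
    exact hexp.mul (hVd t)
  have hWanti : Antitone W := by
    refine antitone_of_deriv_nonpos (fun t => (hWd t).differentiableAt) (fun t => ?_)
    rw [(hWd t).deriv]
    have hkey := key (xi t) (xj t)
    have hVe : V t = ‖e t‖ ^ 2 := (real_inner_self_eq_norm_sq (e t))
    have hip : ⟪e t, -(gradient f (xi t) - gradient f (xj t)) - k • e t⟫
        = -⟪e t, gradient f (xi t) - gradient f (xj t)⟫ - k * ‖e t‖ ^ 2 := by
      rw [inner_sub_right, inner_neg_right, real_inner_smul_right,
        real_inner_self_eq_norm_sq]
    rw [hip, hVe]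
    have hexp := Real.exp_pos (2 * (k - lam) * t)
    nlinarith [sq_nonneg ‖e t‖, mul_le_mul_of_nonneg_left hkey hexp.le]
  intro t ht
  have hWt := hWanti ht
  have hW0 : W 0 = V 0 := by simp [hW]
  have hVt : Real.exp (2 * (k - lam) * t) * V t ≤ V 0 := by
    rw [← hW0]; exact hWt
  have hVe : ∀ s, V s = ‖e s‖ ^ 2 := fun s => real_inner_self_eq_norm_sq (e s)
  have hexpsq : Real.exp (-(k - lam) * t) ^ 2 * Real.exp (2 * (k - lam) * t) = 1 := by
    rw [← Real.exp_nat_mul, ← Real.exp_add]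
    norm_num
    ring
  have hsq : ‖e t‖ ^ 2 ≤ (Real.exp (-(k - lam) * t) * ‖e 0‖) ^ 2 := by
    have h1 : Real.exp (2 * (k - lam) * t) * ‖e t‖ ^ 2 ≤ ‖e 0‖ ^ 2 := by
      rw [← hVe, ← hVe]; exact hVt
    have hexp := Real.exp_pos (2 * (k - lam) * t)
    have hexp2 := Real.exp_pos (-(k - lam) * t)
    nlinarith [sq_nonneg ‖e t‖]
  have := Real.sqrt_le_sqrt hsq
  rwa [Real.sqrt_sq (norm_nonneg _), Real.sqrt_sq (by positivity)] at this
end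

section
/- Let f be C² with each component hⱼ(x) = -∂ⱼ f(x) satisfying ‖∇²hⱼ(x)‖ ≤ Q for all x and all j = 1,…,n. Then for any x¹,…,xᵖ ∈ ℝⁿ with mean x•, the distortion vector ε = ∇f(x•) - (1/p)∑ᵢ ∇f(xⁱ) satisfies ‖ε‖ ≤ (√n · Q / (2p)) ∑ᵢ ‖xⁱ - x•‖². -/
open scoped RealInnerProductSpace
open Finset

private lemma one_dim' (φ φ' φ'' : ℝ → ℝ) (C : ℝ)
    (h1 : ∀ t, HasDerivAt φ (φ' t) t) (h2 : ∀ t, HasDerivAt φ' (φ'' t) t)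
    (hc : Continuous φ'') (hb : ∀ t, |φ'' t| ≤ C) :
    |φ 1 - φ 0 - φ' 0| ≤ C / 2 := by
  have hC0 : 0 ≤ C := le_trans (abs_nonneg _) (hb 0)
  have hcont' : Continuous φ' :=
    Differentiable.continuous (fun t => (h2 t).differentiableAt)
  have key : ∀ t ∈ Set.uIoc (0:ℝ) 1, ‖φ' t - φ' 0‖ ≤ C * t := by
    intro t ht
    rw [Set.uIoc_of_le (by norm_num)] at ht
    have hft : φ' t - φ' 0 = ∫ s in (0:ℝ)..t, φ'' s :=
      (intervalIntegral.integral_eq_sub_of_hasDerivAt (fun s _ => h2 s)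
        (hc.intervalIntegrable 0 t)).symm
    rw [hft]
    have := intervalIntegral.norm_integral_le_of_norm_le_const
      (C := C) (f := φ'') (a := 0) (b := t) (fun s _ => hb s)
    simpa [abs_of_nonneg ht.1.le] using this
  have hint : φ 1 - φ 0 - φ' 0 = ∫ t in (0:ℝ)..1, (φ' t - φ' 0) := by
    have h1' : φ 1 - φ 0 = ∫ t in (0:ℝ)..1, φ' t :=
      (intervalIntegral.integral_eq_sub_of_hasDerivAt (fun t _ => h1 t)
        (hcont'.intervalIntegrable 0 1)).symm
    rw [intervalIntegral.integral_sub (hcont'.intervalIntegrable 0 1)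
      intervalIntegrable_const, ← h1', intervalIntegral.integral_const]
    simp
  have hval : ∫ t in (0:ℝ)..1, C * t = C / 2 := by
    rw [intervalIntegral.integral_const_mul, integral_id]
    ring
  have hb2 : ‖∫ t in (0:ℝ)..1, (φ' t - φ' 0)‖ ≤ |∫ t in (0:ℝ)..1, C * t| :=
    intervalIntegral.norm_integral_le_abs_of_norm_le
      (MeasureTheory.ae_restrict_of_forall_mem measurableSet_uIoc key)
      ((continuous_const.mul continuous_id).intervalIntegrable 0 1)
  rw [hint]
  calc |∫ t in (0:ℝ)..1, (φ' t - φ' 0)| ≤ |∫ t in (0:ℝ)..1, C * t| := hb2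
    _ = C / 2 := by rw [hval, abs_of_nonneg (by positivity)]

private lemma taylor_bound' {n : ℕ} (g : EuclideanSpace ℝ (Fin n) → ℝ)
    (hg : ContDiff ℝ 2 g) (Q : ℝ)
    (hH : ∀ x v : EuclideanSpace ℝ (Fin n), |⟪v, fderiv ℝ (gradient g) x v⟫| ≤ Q * ‖v‖ ^ 2)
    (a b : EuclideanSpace ℝ (Fin n)) :
    |g b - g a - ⟪gradient g a, b - a⟫| ≤ Q / 2 * ‖b - a‖ ^ 2 := by
  set v := b - a with hv
  set L : ℝ → EuclideanSpace ℝ (Fin n) := fun t => a + t • v with hL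
  have hline : ∀ t, HasDerivAt L v t := by
    intro t
    simpa [hL] using ((hasDerivAt_id t).smul_const v).const_add a
  have hgrad : ContDiff ℝ 1 (gradient g) := by
    have h1 : ContDiff ℝ 1 (fderiv ℝ g) := hg.fderiv_right (by norm_cast)
    exact (InnerProductSpace.toDual ℝ (EuclideanSpace ℝ (Fin n))).symm.contDiff.comp h1
  set φ : ℝ → ℝ := fun t => g (L t) with hφ
  set φ' : ℝ → ℝ := fun t => ⟪v, gradient g (L t)⟫ with hφ'
  set φ'' : ℝ → ℝ := fun t => ⟪v, fderiv ℝ (gradient g) (L t) v⟫ with hφ''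
  have h1 : ∀ t, HasDerivAt φ (φ' t) t := by
    intro t
    have hfd := (hg.differentiable (by norm_num) (L t)).hasFDerivAt
    have := hfd.comp_hasDerivAt t (hline t)
    have heq : fderiv ℝ g (L t) v = φ' t := by
      show _ = ⟪v, gradient g (L t)⟫
      rw [real_inner_comm]
      exact (InnerProductSpace.toDual_symm_apply).symm
    rw [heq] at this
    exact this
  have h2 : ∀ t, HasDerivAt φ' (φ'' t) t := by
    intro t
    have hG := (hgrad.differentiable one_ne_zero (L t)).hasFDerivAt
    have := ((innerSL ℝ v).hasFDerivAt.comp (L t) hG).comp_hasDerivAt t (hline t)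
    exact this
  have hc : Continuous φ'' := by
    have h1 : Continuous (fderiv ℝ (gradient g)) := hgrad.continuous_fderiv one_ne_zero
    have h2 : Continuous L := by fun_prop
    exact (innerSL ℝ v).continuous.comp
      ((ContinuousLinearMap.apply ℝ (EuclideanSpace ℝ (Fin n)) v).continuous.comp (h1.comp h2))
  have hb : ∀ t, |φ'' t| ≤ Q * ‖v‖ ^ 2 := fun t => hH (L t) v
  have := one_dim' φ φ' φ'' (Q * ‖v‖ ^ 2) h1 h2 hc hb
  have hL0 : L 0 = a := by simp [hL]
  have hL1 : L 1 = b := by simp [hL, hv]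
  rw [hφ, hφ'] at this
  simp only [hL0, hL1] at this
  rw [show (⟪gradient g a, v⟫ : ℝ) = ⟪v, gradient g a⟫ from real_inner_comm _ _]
  calc |g b - g a - ⟪v, gradient g a⟫| ≤ Q * ‖v‖ ^ 2 / 2 := this
    _ = Q / 2 * ‖v‖ ^ 2 := by ring


/-- Bound on the distortion vector: if each component `hⱼ = -(∇f)ⱼ` of the negative
gradient has Hessian of operator norm at most `Q`, then
`‖∇f(x•) - (1/p)∑ᵢ ∇f(xⁱ)‖ ≤ (√n·Q/(2p)) ∑ᵢ ‖xⁱ - x•‖²`. -/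
theorem stmt_4 (n p : ℕ) (hp : 0 < p) (f : EuclideanSpace ℝ (Fin n) → ℝ) (Q : ℝ)
    (hQ : 0 < Q) (hf : ContDiff ℝ 3 f)
    (hHess : ∀ (j : Fin n) (x v : EuclideanSpace ℝ (Fin n)),
      |⟪v, fderiv ℝ (gradient fun y => -(gradient f y j)) x v⟫| ≤ Q * ‖v‖ ^ 2)
    (x : Fin p → EuclideanSpace ℝ (Fin n)) :
    ‖gradient f ((p : ℝ)⁻¹ • ∑ j : Fin p, x j)
        - (p : ℝ)⁻¹ • ∑ i : Fin p, gradient f (x i)‖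
      ≤ Real.sqrt n * Q / (2 * p)
          * ∑ i : Fin p, ‖x i - (p : ℝ)⁻¹ • ∑ j : Fin p, x j‖ ^ 2 := by
  have hp' : (0:ℝ) < p := by exact_mod_cast hp
  set D : EuclideanSpace ℝ (Fin n) := (p : ℝ)⁻¹ • ∑ j : Fin p, x j with hD
  set S : ℝ := ∑ i : Fin p, ‖x i - D‖ ^ 2 with hS
  set ε : EuclideanSpace ℝ (Fin n) :=
    gradient f D - (p : ℝ)⁻¹ • ∑ i : Fin p, gradient f (x i) with hε
  have hS0 : 0 ≤ S := Finset.sum_nonneg fun i _ => sq_nonneg _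
  have hgf : ContDiff ℝ 2 (gradient f) :=
    (InnerProductSpace.toDual ℝ (EuclideanSpace ℝ (Fin n))).symm.contDiff.comp
      (hf.fderiv_right (by norm_cast))
  have hsum0 : ∑ i : Fin p, (x i - D) = 0 := by
    rw [Finset.sum_sub_distrib, Finset.sum_const, Finset.card_univ, Fintype.card_fin,
      sub_eq_zero, ← Nat.cast_smul_eq_nsmul ℝ, hD, smul_smul,
      mul_inv_cancel₀ (ne_of_gt hp'), one_smul]
  have hcomp : ∀ j : Fin n, |ε j| ≤ Q / (2 * p) * S := by
    intro j
    set h : EuclideanSpace ℝ (Fin n) → ℝ := fun y => -(gradient f y j) with hh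
    have hh2 : ContDiff ℝ 2 h := (contDiff_euclidean.mp hgf j).neg
    have key : ∀ i : Fin p, |h (x i) - h D - ⟪gradient h D, x i - D⟫|
        ≤ Q / 2 * ‖x i - D‖ ^ 2 := fun i => taylor_bound' h hh2 Q (hHess j) D (x i)
    have hinner : ∑ i : Fin p, (⟪gradient h D, x i - D⟫ : ℝ) = 0 := by
      rw [← inner_sum, hsum0, inner_zero_right]
    have hval : ε j = (p:ℝ)⁻¹ * ∑ i : Fin p,
        (h (x i) - h D - ⟪gradient h D, x i - D⟫) := by
      rw [Finset.sum_sub_distrib, Finset.sum_sub_distrib, hinner, sub_zero,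
        Finset.sum_const, Finset.card_univ, Fintype.card_fin]
      have appsum : (∑ i : Fin p, gradient f (x i)) j
          = ∑ i : Fin p, gradient f (x i) j :=
        map_sum (EuclideanSpace.proj j) (fun i => gradient f (x i)) Finset.univ
      simp only [hε, hh, PiLp.sub_apply, PiLp.smul_apply, smul_eq_mul, nsmul_eq_mul,
        Finset.sum_neg_distrib]
      rw [appsum]
      field_simp
      ring
    rw [hval, abs_mul, abs_of_nonneg (inv_nonneg.2 hp'.le)]
    calc (p:ℝ)⁻¹ * |∑ i : Fin p, (h (x i) - h D - ⟪gradient h D, x i - D⟫)|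
        ≤ (p:ℝ)⁻¹ * ∑ i : Fin p, |h (x i) - h D - ⟪gradient h D, x i - D⟫| := by
          gcongr; exact Finset.abs_sum_le_sum_abs _ _
      _ ≤ (p:ℝ)⁻¹ * ∑ i : Fin p, Q / 2 * ‖x i - D‖ ^ 2 := by
          gcongr with i _hi; exact key i
      _ = Q / (2 * p) * S := by
          rw [← Finset.mul_sum, ← hS]
          field_simp
  have hc0 : 0 ≤ Q / (2 * p) * S := by positivity
  calc ‖ε‖ = Real.sqrt (∑ j : Fin n, ‖ε j‖ ^ 2) := EuclideanSpace.norm_eq ε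
    _ ≤ Real.sqrt (∑ _j : Fin n, (Q / (2 * p) * S) ^ 2) := by
        apply Real.sqrt_le_sqrt
        apply Finset.sum_le_sum
        intro j _
        rw [Real.norm_eq_abs]
        exact pow_le_pow_left₀ (abs_nonneg _) (hcomp j) 2
    _ = Real.sqrt ((n : ℝ) * (Q / (2 * p) * S) ^ 2) := by
        rw [Finset.sum_const, Finset.card_univ, Fintype.card_fin, nsmul_eq_mul]
    _ = Real.sqrt n * (Q / (2 * p) * S) := by
        rw [Real.sqrt_mul (Nat.cast_nonneg n), Real.sqrt_sq hc0]
    _ = Real.sqrt n * Q / (2 * p) * S := by ring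
end

section
/- Consider the deterministic coupled system ẋⁱ = -∇f(xⁱ) + ∑_{j≠i}(u(xʲ) - u(xⁱ)) for i = 1,…,p, where f is such that -∇f is contracting with some rate λ₂ > 0 in the Euclidean metric (f is λ₂-strongly convex) and the map y ↦ -∇f(y) - p·u(y) is contracting with rate λ₁ > 0. Then every trajectory xⁱ(t) converges exponentially to the unique critical point x* of f. -/
open scoped RealInnerProductSpace
open Finset

set_option maxHeartbeats 2000000

variable {n : ℕ}
local notation "E" => EuclideanSpace ℝ (Fin n)

lemma lineDeriv' (F : E → E) (hF : Differentiable ℝ F) (c b v : E) (s : ℝ) :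
    HasDerivAt (fun s : ℝ => ⟪c, F (b + s • v)⟫) (⟪c, fderiv ℝ F (b + s • v) v⟫) s := by
  have hγ : HasDerivAt (fun s : ℝ => b + s • v) v s := by
    simpa using ((hasDerivAt_id s).smul_const v).const_add b
  have hcomp : HasDerivAt (fun s : ℝ => F (b + s • v)) (fderiv ℝ F (b + s • v) v) s :=
    (hF (b + s • v)).hasFDerivAt.comp_hasDerivAt s hγ
  simpa using (hasDerivAt_const s c).inner ℝ hcomp

lemma mvt_le' (φ φ' : ℝ → ℝ) (hφ : ∀ s, HasDerivAt φ (φ' s) s) {t c : ℝ} (ht : 0 ≤ t)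
    (hc : ∀ s ∈ Set.Ioo (0:ℝ) t, φ' s ≤ c) : φ t ≤ φ 0 + c * t := by
  rcases eq_or_lt_of_le ht with h | h
  · simp [← h]
  · obtain ⟨s, hs, heq⟩ := exists_hasDerivAt_eq_slope φ φ' h
      (fun s _ => (hφ s).continuousAt.continuousWithinAt) (fun s _ => hφ s)
    have : φ t - φ 0 = φ' s * (t - 0) := by
      field_simp at heq; linarith [heq]
    have h2 : φ' s * t ≤ c * t := mul_le_mul_of_nonneg_right (hc s hs) ht
    simp at this; linarith

lemma mvt_ge' (φ φ' : ℝ → ℝ) (hφ : ∀ s, HasDerivAt φ (φ' s) s) {t c : ℝ} (ht : 0 ≤ t)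
    (hc : ∀ s ∈ Set.Ioo (0:ℝ) t, c ≤ φ' s) : φ 0 + c * t ≤ φ t := by
  have := mvt_le' (fun s => -φ s) (fun s => -φ' s) (fun s => (hφ s).neg) ht
    (fun s hs => neg_le_neg (hc s hs))
  simp at this; linarith

lemma incr_contr (F : E → E) (hF : Differentiable ℝ F) (lam : ℝ)
    (h : ∀ y v, ⟪v, fderiv ℝ F y v⟫ ≤ -lam * ‖v‖ ^ 2) (a b : E) :
    ⟪a - b, F a - F b⟫ ≤ -lam * ‖a - b‖ ^ 2 := by
  set v := a - b with hv
  have key : (fun s : ℝ => ⟪v, F (b + s • v)⟫) 1 ≤ (fun s : ℝ => ⟪v, F (b + s • v)⟫) 0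
      + (-lam * ‖v‖ ^ 2) * 1 :=
    mvt_le' _ (fun s => ⟪v, fderiv ℝ F (b + s • v) v⟫) (lineDeriv' F hF v b v)
      zero_le_one (fun s _ => h (b + s • v) v)
  simp only [one_smul, zero_smul, add_zero, mul_one] at key
  have : b + v = a := by rw [hv]; abel
  rw [this] at key
  rw [inner_sub_right]
  linarith

-- strong convexity: f y ≥ f a + ⟪y - a, ∇f a⟫ + lam2/2 ‖y-a‖²
lemma strong_convex (f : E → ℝ) (hf : ContDiff ℝ 2 f) (lam2 : ℝ)
    (hconv : ∀ x v : E, lam2 * ‖v‖ ^ 2 ≤ ⟪v, fderiv ℝ (gradient f) x v⟫)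
    (a y : E) :
    f a + ⟪y - a, gradient f a⟫ + lam2 / 2 * ‖y - a‖ ^ 2 ≤ f y := by
  have hg : ContDiff ℝ 1 (gradient f) := by
    have h1 : ContDiff ℝ 1 (fderiv ℝ f) := hf.fderiv_right (le_refl _)
    have h2 : gradient f = fun x => (InnerProductSpace.toDual ℝ (EuclideanSpace ℝ (Fin n))).symm (fderiv ℝ f x) := rfl
    rw [h2]
    exact ((InnerProductSpace.toDual ℝ (EuclideanSpace ℝ (Fin n))).symm.toContinuousLinearEquiv.toContinuousLinearMap.contDiff).comp h1
  have hgd : Differentiable ℝ (gradient f) := hg.differentiable one_ne_zero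
  set v := y - a with hv
  set ψ : ℝ → ℝ := fun s => ⟪v, gradient f (a + s • v)⟫ with hψdef
  have hψ : ∀ s, HasDerivAt ψ (⟪v, fderiv ℝ (gradient f) (a + s • v) v⟫) s :=
    lineDeriv' (gradient f) hgd v a v
  have step1 : ∀ s : ℝ, 0 ≤ s → ψ 0 + lam2 * ‖v‖ ^ 2 * s ≤ ψ s := by
    intro s hs
    simpa [mul_comm] using mvt_ge' ψ _ hψ hs (fun r _ => hconv (a + r • v) v)
  have hγ : ∀ s : ℝ, HasDerivAt (fun s : ℝ => a + s • v) v s := by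
    intro s; simpa using ((hasDerivAt_id s).smul_const v).const_add a
  have hfd : Differentiable ℝ f := hf.differentiable (by norm_num)
  have hfγ : ∀ s : ℝ, HasDerivAt (fun s : ℝ => f (a + s • v)) (⟪v, gradient f (a + s • v)⟫) s := by
    intro s
    have h1 := ((hfd (a + s • v)).hasGradientAt.hasFDerivAt).comp_hasDerivAt s (hγ s)
    rw [InnerProductSpace.toDual_apply_apply] at h1
    rw [real_inner_comm] at h1
    exact h1
  set φ : ℝ → ℝ := fun s => f (a + s • v) - s * ψ 0 - s ^ 2 * (lam2 / 2 * ‖v‖ ^ 2) with hφdef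
  have hφ : ∀ s, HasDerivAt φ (ψ s - ψ 0 - s * (lam2 * ‖v‖ ^ 2)) s := by
    intro s
    have h1 : HasDerivAt (fun s : ℝ => s * ψ 0) (ψ 0) s := by
      simpa using (hasDerivAt_id s).mul_const (ψ 0)
    have h2 : HasDerivAt (fun s : ℝ => s ^ 2 * (lam2 / 2 * ‖v‖ ^ 2))
        (2 * s * (lam2 / 2 * ‖v‖ ^ 2)) s := by
      simpa using (hasDerivAt_pow 2 s).mul_const (lam2 / 2 * ‖v‖ ^ 2)
    have := ((hfγ s).sub h1).sub h2
    rw [show ψ s - ψ 0 - s * (lam2 * ‖v‖ ^ 2) = ψ s - ψ 0 - 2 * s * (lam2 / 2 * ‖v‖ ^ 2) by ring]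
    exact this
  have final : φ 0 + 0 * 1 ≤ φ 1 := by
    refine mvt_ge' φ _ hφ zero_le_one (fun s hs => ?_)
    have := step1 s (le_of_lt hs.1)
    nlinarith [hs.1, hs.2]
  have e0 : a + (0:ℝ) • v = a := by simp
  have e1 : a + (1:ℝ) • v = y := by simp [hv]
  simp only [hφdef, e0, e1] at final
  simp only [hψdef, e0] at final
  nlinarith [final]

lemma normsq_deriv' {w : ℝ → E} {w' : E} {t : ℝ} (hw : HasDerivAt w w' t) :
    HasDerivAt (fun t => ‖w t‖ ^ 2) (2 * ⟪w t, w'⟫) t := by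
  have h := hw.inner ℝ hw
  have he : (fun t => ⟪w t, w t⟫) = fun t => ‖w t‖ ^ 2 := by
    funext s; exact real_inner_self_eq_norm_sq (w s)
  rw [he] at h
  rw [real_inner_comm (w t) w', ← two_mul] at h
  exact h

lemma sq_exp' (a : ℝ) : Real.exp a ^ 2 = Real.exp (2 * a) := by
  rw [sq, ← Real.exp_add]; ring_nf

/-- Deterministic distributed gradient descent with arbitrary all-to-all coupling:
if `-∇f - p·u` is contracting with rate `λ₁` and `-∇f` is contracting with rate
`λ₂` (both in the Euclidean metric), then every agent converges exponentially to
the unique critical point `x*` of `f`. -/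
theorem stmt_5 (n p : ℕ) (hp : 0 < p)
    (f : EuclideanSpace ℝ (Fin n) → ℝ)
    (u : EuclideanSpace ℝ (Fin n) → EuclideanSpace ℝ (Fin n))
    (lam1 lam2 : ℝ) (hlam1 : 0 < lam1) (hlam2 : 0 < lam2)
    (hf : ContDiff ℝ 2 f) (hu : ContDiff ℝ 1 u)
    -- `-∇f` is contracting with rate `λ₂` : `∇²f ⪰ λ₂ I`
    (hconv : ∀ x v : EuclideanSpace ℝ (Fin n),
      lam2 * ‖v‖ ^ 2 ≤ ⟪v, fderiv ℝ (gradient f) x v⟫)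
    -- `y ↦ -∇f(y) - p·u(y)` is contracting with rate `λ₁`
    (hcontr : ∀ x v : EuclideanSpace ℝ (Fin n),
      ⟪v, fderiv ℝ (fun y => -gradient f y - (p : ℝ) • u y) x v⟫ ≤ -lam1 * ‖v‖ ^ 2)
    (xstar : EuclideanSpace ℝ (Fin n)) (hxstar : gradient f xstar = 0)
    (x : Fin p → ℝ → EuclideanSpace ℝ (Fin n))
    (hx : ∀ (i : Fin p) (t : ℝ),
      HasDerivAt (x i)
        (-gradient f (x i t) + ∑ j ∈ univ.erase i, (u (x j t) - u (x i t))) t) :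
    ∃ C > (0 : ℝ), ∃ rate > (0 : ℝ), ∀ (i : Fin p) (t : ℝ), 0 ≤ t →
      ‖x i t - xstar‖ ≤ C * Real.exp (-rate * t) := by
  have hp1 : (1 : ℝ) ≤ (p : ℝ) := by exact_mod_cast hp
  have hppos : (0 : ℝ) < (p : ℝ) := by positivity
  -- gradient is C¹
  have hgc : ContDiff ℝ 1 (gradient f) := by
    have h1 : ContDiff ℝ 1 (fderiv ℝ f) := hf.fderiv_right (le_refl _)
    have h2 : gradient f
        = fun z => (InnerProductSpace.toDual ℝ (EuclideanSpace ℝ (Fin n))).symm (fderiv ℝ f z) :=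
      rfl
    rw [h2]
    exact ((InnerProductSpace.toDual ℝ
      (EuclideanSpace ℝ (Fin n))).symm.toContinuousLinearEquiv.toContinuousLinearMap.contDiff).comp h1
  set G : EuclideanSpace ℝ (Fin n) → EuclideanSpace ℝ (Fin n) :=
    fun y => -gradient f y - (p : ℝ) • u y with hGdef
  have hGd : Differentiable ℝ G :=
    (hgc.differentiable one_ne_zero).neg.sub ((hu.differentiable one_ne_zero).const_smul ((p : ℝ)))
  have hA : ∀ a b, ⟪a - b, G a - G b⟫ ≤ -lam1 * ‖a - b‖ ^ 2 :=
    incr_contr G hGd lam1 hcontr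
  have hB : ∀ a y, f a + ⟪y - a, gradient f a⟫ + lam2 / 2 * ‖y - a‖ ^ 2 ≤ f y :=
    strong_convex f hf lam2 hconv
  -- rewrite the dynamics
  have hx' : ∀ (i : Fin p) (t : ℝ),
      HasDerivAt (x i) (G (x i t) + ∑ j, u (x j t)) t := by
    intro i t
    have h := hx i t
    have he : -gradient f (x i t) + ∑ j ∈ univ.erase i, (u (x j t) - u (x i t))
        = G (x i t) + ∑ j, u (x j t) := by
      rw [Finset.sum_sub_distrib, Finset.sum_const, Finset.card_erase_of_mem (mem_univ i),
        Finset.card_univ, Fintype.card_fin, Finset.sum_erase_eq_sub (mem_univ i), hGdef,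
        ← Nat.cast_smul_eq_nsmul ℝ]
      have : ((p - 1 : ℕ) : ℝ) = (p : ℝ) - 1 := by
        have := hp; push_cast [Nat.cast_sub hp]; ring
      rw [this, sub_smul, one_smul]
      module
    rwa [he] at h
  -- synchronization
  have hsync : ∀ (i j : Fin p) (t : ℝ), 0 ≤ t →
      ‖x i t - x j t‖ ≤ ‖x i 0 - x j 0‖ * Real.exp (-lam1 * t) := by
    intro i j t ht
    set w : ℝ → EuclideanSpace ℝ (Fin n) := fun s => x i s - x j s with hwdef
    have hw : ∀ s, HasDerivAt w (G (x i s) - G (x j s)) s := by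
      intro s
      have := (hx' i s).sub (hx' j s)
      rw [add_sub_add_right_eq_sub] at this; exact this
    set φ : ℝ → ℝ := fun s => ‖w s‖ ^ 2 * Real.exp (2 * lam1 * s) with hφdef
    have hexp : ∀ s : ℝ, HasDerivAt (fun r => Real.exp (2 * lam1 * r))
        (Real.exp (2 * lam1 * s) * (2 * lam1)) s := by
      intro s
      have h1 : HasDerivAt (fun r : ℝ => 2 * lam1 * r) (2 * lam1) s := by
        simpa using (hasDerivAt_id s).const_mul (2 * lam1)
      exact h1.exp
    have hφ : ∀ s, HasDerivAt φ
        ((2 * ⟪w s, G (x i s) - G (x j s)⟫) * Real.exp (2 * lam1 * s)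
          + ‖w s‖ ^ 2 * (Real.exp (2 * lam1 * s) * (2 * lam1))) s := by
      intro s
      exact (normsq_deriv' (hw s)).mul (hexp s)
    have key : φ t ≤ φ 0 + 0 * t := by
      refine mvt_le' φ _ hφ ht (fun s _ => ?_)
      have h1 := hA (x i s) (x j s)
      have h2 : (0:ℝ) < Real.exp (2 * lam1 * s) := Real.exp_pos _
      have : 2 * ⟪w s, G (x i s) - G (x j s)⟫ + ‖w s‖ ^ 2 * (2 * lam1) ≤ 0 := by
        simp only [hwdef]; nlinarith [h1]
      nlinarith [h2, this]
    simp only [hφdef, mul_zero, add_zero, mul_one, Real.exp_zero, zero_mul] at key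
    have hsq : ‖w t‖ ^ 2 ≤ (‖w 0‖ * Real.exp (-lam1 * t)) ^ 2 := by
      rw [mul_pow, sq_exp']
      have h2 : (0:ℝ) < Real.exp (2 * lam1 * t) := Real.exp_pos _
      have h3 : Real.exp (2 * (-lam1 * t)) = (Real.exp (2 * lam1 * t))⁻¹ := by
        rw [← Real.exp_neg]; ring_nf
      rw [h3, ← div_eq_mul_inv, le_div_iff₀ h2]
      linarith [key]
    have := (pow_le_pow_iff_left₀ (norm_nonneg (w t))
      (by positivity) (two_ne_zero)).mp hsq
    simpa [hwdef] using this
  -- initial spread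
  set D : ℝ := ∑ i, ∑ j, ‖x i 0 - x j 0‖ with hDdef
  have hD0 : 0 ≤ D := Finset.sum_nonneg fun i _ => Finset.sum_nonneg fun j _ => norm_nonneg _
  have hDij : ∀ i j : Fin p, ‖x i 0 - x j 0‖ ≤ D := by
    intro i j
    rw [hDdef]
    calc ‖x i 0 - x j 0‖ ≤ ∑ j', ‖x i 0 - x j' 0‖ :=
          Finset.single_le_sum (f := fun j' => ‖x i 0 - x j' 0‖)
            (fun k _ => norm_nonneg _) (mem_univ j)
      _ ≤ ∑ i', ∑ j', ‖x i' 0 - x j' 0‖ := Finset.single_le_sum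
          (f := fun k => ∑ j', ‖x k 0 - x j' 0‖)
          (fun k _ => Finset.sum_nonneg fun j' _ => norm_nonneg _) (mem_univ i)
  -- the average
  set xb : ℝ → EuclideanSpace ℝ (Fin n) := fun t => (p : ℝ)⁻¹ • ∑ i, x i t with hxbdef
  have hxb : ∀ t, HasDerivAt xb ((p : ℝ)⁻¹ • (-(∑ i, gradient f (x i t)))) t := by
    intro t
    have h1 : HasDerivAt (fun t => ∑ i, x i t)
        (∑ i, (G (x i t) + ∑ j, u (x j t))) t :=
      HasDerivAt.fun_sum (fun i _ => hx' i t)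
    have h2 : (∑ i, (G (x i t) + ∑ j, u (x j t))) = -(∑ i, gradient f (x i t)) := by
      rw [Finset.sum_add_distrib, Finset.sum_const, Finset.card_univ, Fintype.card_fin,
        ← Nat.cast_smul_eq_nsmul ℝ]
      simp only [hGdef]
      rw [Finset.sum_sub_distrib, Finset.sum_neg_distrib, ← Finset.smul_sum]
      module
    rw [h2] at h1
    exact h1.const_smul ((p : ℝ)⁻¹)
  -- deviation from average
  have hdel : ∀ (i : Fin p) (t : ℝ), 0 ≤ t →
      ‖x i t - xb t‖ ≤ D * Real.exp (-lam1 * t) := by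
    intro i t ht
    have he : x i t - xb t = (p : ℝ)⁻¹ • ∑ j, (x i t - x j t) := by
      rw [Finset.sum_sub_distrib, Finset.sum_const, Finset.card_univ, Fintype.card_fin,
        ← Nat.cast_smul_eq_nsmul ℝ, smul_sub, smul_smul, inv_mul_cancel₀ (ne_of_gt hppos),
        one_smul, hxbdef]
    rw [he]
    rw [norm_smul]
    have h1 : ‖∑ j, (x i t - x j t)‖ ≤ ∑ j, ‖x i 0 - x j 0‖ * Real.exp (-lam1 * t) :=
      le_trans (norm_sum_le _ _) (Finset.sum_le_sum fun j _ => hsync i j t ht)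
    have h2 : ∑ j, ‖x i 0 - x j 0‖ * Real.exp (-lam1 * t)
        = (∑ j, ‖x i 0 - x j 0‖) * Real.exp (-lam1 * t) := by
      rw [Finset.sum_mul]
    have h3 : (∑ j, ‖x i 0 - x j 0‖) ≤ D := by
      rw [hDdef]
      exact Finset.single_le_sum (f := fun k => ∑ j', ‖x k 0 - x j' 0‖)
        (fun k _ => Finset.sum_nonneg fun j' _ => norm_nonneg _) (mem_univ i)
    have h4 : ‖(p:ℝ)⁻¹‖ ≤ 1 := by
      rw [Real.norm_eq_abs, abs_of_pos (by positivity)]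
      rw [inv_le_one_iff₀]; right; exact hp1
    have h5 : (0:ℝ) ≤ Real.exp (-lam1 * t) := le_of_lt (Real.exp_pos _)
    calc ‖(p:ℝ)⁻¹‖ * ‖∑ j, (x i t - x j t)‖
        ≤ 1 * ((∑ j, ‖x i 0 - x j 0‖) * Real.exp (-lam1 * t)) := by
          apply mul_le_mul h4 (le_trans h1 (le_of_eq h2)) (norm_nonneg _) zero_le_one
      _ ≤ D * Real.exp (-lam1 * t) := by
          rw [one_mul]; exact mul_le_mul_of_nonneg_right h3 h5
  -- bound on the gradient near xstar
  obtain ⟨L0, hL0⟩ := (isCompact_closedBall xstar D).exists_bound_of_continuousOn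
      (hgc.continuous.continuousOn)
  set L : ℝ := max L0 0 with hLdef
  have hL : ∀ z ∈ Metric.closedBall xstar D, ‖gradient f z‖ ≤ L :=
    fun z hz => le_trans (hL0 z hz) (le_max_left _ _)
  have hLnn : 0 ≤ L := le_max_right _ _
  set ν : ℝ := min lam1 lam2 with hnudef
  have hν0 : 0 < ν := lt_min hlam1 hlam2
  have hν1 : ν ≤ lam1 := min_le_left _ _
  have hν2 : ν ≤ lam2 := min_le_right _ _
  set r2 : ℝ → ℝ := fun t => ‖xb t - xstar‖ ^ 2 with hr2def
  have hr2nn : ∀ t, 0 ≤ r2 t := fun t => by rw [hr2def]; positivity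
  have hpinv : (0:ℝ) < (p:ℝ)⁻¹ := by positivity
  have hpp : (p:ℝ)⁻¹ * (p:ℝ) = 1 := inv_mul_cancel₀ (ne_of_gt hppos)
  -- key differential inequality for the average
  have hkey : ∀ s : ℝ, 0 ≤ s →
      2 * ⟪xb s - xstar, (p:ℝ)⁻¹ • (-(∑ i, gradient f (x i s)))⟫
        ≤ 2 * L * D * Real.exp (-lam1 * s) - lam2 * r2 s := by
    intro s hs
    have hin : ⟪xb s - xstar, (p:ℝ)⁻¹ • (-(∑ i, gradient f (x i s)))⟫
        = (p:ℝ)⁻¹ * ∑ i, ⟪xstar - xb s, gradient f (x i s)⟫ := by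
      rw [inner_smul_right, inner_neg_right, inner_sum, ← Finset.sum_neg_distrib]
      congr 1
      refine Finset.sum_congr rfl fun i _ => ?_
      rw [← inner_neg_left, neg_sub]
    have hexp1 : Real.exp (-lam1 * s) ≤ 1 := by
      rw [Real.exp_le_one_iff]; nlinarith
    have hper : ∀ i : Fin p, ⟪xstar - xb s, gradient f (x i s)⟫
        ≤ L * (D * Real.exp (-lam1 * s)) - lam2 / 2 * ‖x i s - xstar‖ ^ 2 := by
      intro i
      set δ : EuclideanSpace ℝ (Fin n) := x i s - xb s with hδdef
      have hδ : ‖δ‖ ≤ D * Real.exp (-lam1 * s) := hdel i s hs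
      have hδD : ‖δ‖ ≤ D := le_trans hδ (by nlinarith)
      have ha := hB (x i s) (x i s + (xstar - xb s))
      have ha1 : (x i s + (xstar - xb s)) - x i s = xstar - xb s := by abel
      have ha2 : x i s + (xstar - xb s) = xstar + δ := by rw [hδdef]; abel
      rw [ha1, ha2] at ha
      have hb := hB (xstar + δ) xstar
      have hb1 : xstar - (xstar + δ) = -δ := by abel
      rw [hb1, inner_neg_left] at hb
      have hb2 : ⟪δ, gradient f (xstar + δ)⟫ ≤ ‖δ‖ * L := by
        have hmem : xstar + δ ∈ Metric.closedBall xstar D := by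
          rw [Metric.mem_closedBall, dist_eq_norm]
          simpa using hδD
        have hgb := hL (xstar + δ) hmem
        nlinarith [norm_nonneg δ, real_inner_le_norm δ (gradient f (xstar + δ))]
      have hc := hB xstar (x i s)
      rw [hxstar, inner_zero_right] at hc
      have hnn1 : 0 ≤ lam2 / 2 * ‖xstar - xb s‖ ^ 2 := by positivity
      have hnn2 : 0 ≤ lam2 / 2 * ‖-δ‖ ^ 2 := by positivity
      have hδL : ‖δ‖ * L ≤ L * (D * Real.exp (-lam1 * s)) := by
        nlinarith [hδ, hLnn]
      linarith
    have hsum : ∑ i, ⟪xstar - xb s, gradient f (x i s)⟫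
        ≤ (p:ℝ) * (L * (D * Real.exp (-lam1 * s)))
          - lam2 / 2 * ∑ i, ‖x i s - xstar‖ ^ 2 := by
      calc ∑ i, ⟪xstar - xb s, gradient f (x i s)⟫
          ≤ ∑ i : Fin p, (L * (D * Real.exp (-lam1 * s)) - lam2 / 2 * ‖x i s - xstar‖ ^ 2) :=
            Finset.sum_le_sum fun i _ => hper i
        _ = (p:ℝ) * (L * (D * Real.exp (-lam1 * s)))
            - lam2 / 2 * ∑ i, ‖x i s - xstar‖ ^ 2 := by
            rw [Finset.sum_sub_distrib, Finset.sum_const, Finset.card_univ, Fintype.card_fin,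
              ← Finset.mul_sum, nsmul_eq_mul]
    have hcs : (p:ℝ) * r2 s ≤ ∑ i, ‖x i s - xstar‖ ^ 2 := by
      set A : ℝ := ∑ i, ‖x i s - xstar‖ with hAdef
      have h1 : xb s - xstar = (p:ℝ)⁻¹ • ∑ i, (x i s - xstar) := by
        rw [Finset.sum_sub_distrib, Finset.sum_const, Finset.card_univ, Fintype.card_fin,
          ← Nat.cast_smul_eq_nsmul ℝ, smul_sub, smul_smul, hpp, one_smul, hxbdef]
      have h2 : ‖xb s - xstar‖ ≤ (p:ℝ)⁻¹ * A := by
        rw [h1, norm_smul, Real.norm_eq_abs, abs_of_pos hpinv, hAdef]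
        exact mul_le_mul_of_nonneg_left (norm_sum_le _ _) (le_of_lt hpinv)
      have h3 : A ^ 2 ≤ (p:ℝ) * ∑ i, ‖x i s - xstar‖ ^ 2 := by
        rw [hAdef]
        have := sq_sum_le_card_mul_sum_sq (s := (univ : Finset (Fin p)))
          (f := fun i => ‖x i s - xstar‖)
        simpa using this
      have h4 : r2 s ≤ ((p:ℝ)⁻¹ * A) ^ 2 := by
        rw [hr2def]
        exact pow_le_pow_left₀ (norm_nonneg _) h2 2
      have h5 : (p:ℝ) * r2 s ≤ (p:ℝ) * ((p:ℝ)⁻¹ * A) ^ 2 :=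
        mul_le_mul_of_nonneg_left h4 (le_of_lt hppos)
      have h6 : (p:ℝ) * ((p:ℝ)⁻¹ * A) ^ 2 = (p:ℝ)⁻¹ * A ^ 2 := by
        field_simp
      have h7 : (p:ℝ)⁻¹ * A ^ 2 ≤ (p:ℝ)⁻¹ * ((p:ℝ) * ∑ i, ‖x i s - xstar‖ ^ 2) :=
        mul_le_mul_of_nonneg_left h3 (le_of_lt hpinv)
      have h8 : (p:ℝ)⁻¹ * ((p:ℝ) * ∑ i, ‖x i s - xstar‖ ^ 2)
          = ∑ i, ‖x i s - xstar‖ ^ 2 := by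
        rw [← mul_assoc, hpp, one_mul]
      linarith
    rw [hin]
    have h5 : ∑ i, ⟪xstar - xb s, gradient f (x i s)⟫
        ≤ (p:ℝ) * (L * (D * Real.exp (-lam1 * s))) - lam2 / 2 * ((p:ℝ) * r2 s) := by
      have := mul_le_mul_of_nonneg_left hcs (by positivity : (0:ℝ) ≤ lam2 / 2)
      linarith [hsum]
    have h6 := mul_le_mul_of_nonneg_left h5 (le_of_lt hpinv)
    have h7 : (p:ℝ)⁻¹ * ((p:ℝ) * (L * (D * Real.exp (-lam1 * s))) - lam2 / 2 * ((p:ℝ) * r2 s))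
        = L * (D * Real.exp (-lam1 * s)) - lam2 / 2 * r2 s := by
      field_simp
    rw [h7] at h6
    linarith
  -- Gronwall for the average
  set φ2 : ℝ → ℝ := fun t => r2 t * Real.exp (ν * t) with hφ2def
  have hφ2 : ∀ s, HasDerivAt φ2
      ((2 * ⟪xb s - xstar, (p:ℝ)⁻¹ • (-(∑ i, gradient f (x i s)))⟫) * Real.exp (ν * s)
        + r2 s * (Real.exp (ν * s) * ν)) s := by
    intro s
    have h1 : HasDerivAt (fun t => xb t - xstar)
        ((p:ℝ)⁻¹ • (-(∑ i, gradient f (x i s)))) s := (hxb s).sub_const xstar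
    have h2 := normsq_deriv' h1
    have h3 : HasDerivAt (fun r => Real.exp (ν * r)) (Real.exp (ν * s) * ν) s := by
      have h4 : HasDerivAt (fun r : ℝ => ν * r) ν s := by
        simpa using (hasDerivAt_id s).const_mul ν
      exact h4.exp
    exact h2.mul h3
  have hgron : ∀ t : ℝ, 0 ≤ t → r2 t * Real.exp (ν * t) ≤ r2 0 + 2 * L * D * t := by
    intro t ht
    have hbound : ∀ s ∈ Set.Ioo (0:ℝ) t,
        (2 * ⟪xb s - xstar, (p:ℝ)⁻¹ • (-(∑ i, gradient f (x i s)))⟫) * Real.exp (ν * s)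
          + r2 s * (Real.exp (ν * s) * ν) ≤ 2 * L * D := by
      intro s hs
      have hs0 : (0:ℝ) ≤ s := le_of_lt hs.1
      have hk := hkey s hs0
      have hE1 : (0:ℝ) < Real.exp (ν * s) := Real.exp_pos _
      have he1 : Real.exp (-lam1 * s) * Real.exp (ν * s) ≤ 1 := by
        rw [← Real.exp_add, Real.exp_le_one_iff]
        nlinarith
      have hLD : (0:ℝ) ≤ 2 * L * D := by positivity
      have f1 := mul_le_mul_of_nonneg_right hk (le_of_lt hE1)
      have f2 := mul_le_mul_of_nonneg_left he1 hLD
      have f3 : 0 ≤ (lam2 - ν) * (r2 s * Real.exp (ν * s)) :=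
        mul_nonneg (by linarith) (mul_nonneg (hr2nn s) (le_of_lt hE1))
      nlinarith [f1, f2, f3]
    have hb := mvt_le' φ2 _ hφ2 ht hbound
    have hb0 : φ2 0 = r2 0 := by rw [hφ2def]; simp
    rw [hb0] at hb
    have hbt : φ2 t = r2 t * Real.exp (ν * t) := by rw [hφ2def]
    rw [hbt] at hb
    linarith
  -- conclusion
  set K : ℝ := r2 0 + 4 * L * D / ν with hKdef
  have hKnn : 0 ≤ K := by
    have hk1 := hr2nn 0
    have hk2 : (0:ℝ) ≤ 4 * L * D / ν := by positivity
    rw [hKdef]; linarith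
  refine ⟨D + Real.sqrt K + 1, by positivity, ν / 4, by positivity, ?_⟩
  intro i t ht
  set a : ℝ := Real.exp (ν / 2 * t) with hadef
  have ha1 : 1 ≤ a := by
    rw [hadef, Real.one_le_exp_iff]
    exact mul_nonneg (by positivity) ht
  have ha0 : 0 < a := lt_of_lt_of_le one_pos ha1
  have haa : Real.exp (ν * t) = a ^ 2 := by
    rw [hadef, sq_exp']
    congr 1; ring
  have htle : t ≤ 2 / ν * a := by
    have h1 := Real.add_one_le_exp (ν / 2 * t)
    rw [← hadef] at h1
    rw [div_mul_eq_mul_div, le_div_iff₀ hν0]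
    nlinarith
  have hr2t : r2 t * a ≤ K := by
    have h1 := hgron t ht
    rw [haa] at h1
    have h3 : 2 * L * D * t ≤ 4 * L * D / ν * a := by
      have hLD : (0:ℝ) ≤ 2 * L * D := by positivity
      have h3a := mul_le_mul_of_nonneg_left htle hLD
      calc 2 * L * D * t ≤ 2 * L * D * (2 / ν * a) := h3a
        _ = 4 * L * D / ν * a := by field_simp; ring
    have h4 : r2 0 ≤ r2 0 * a := le_mul_of_one_le_right (hr2nn 0) ha1
    have h2 : r2 0 + 2 * L * D * t ≤ K * a := by
      rw [hKdef]; nlinarith [h3, h4]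
    nlinarith [h1, h2, ha0, hr2nn t]
  have hxbb : ‖xb t - xstar‖ ≤ Real.sqrt K * Real.exp (-(ν / 4) * t) := by
    have hKa : r2 t ≤ K * a⁻¹ := by
      have := mul_le_mul_of_nonneg_right hr2t (le_of_lt (inv_pos.mpr ha0))
      rwa [mul_assoc, mul_inv_cancel₀ (ne_of_gt ha0), mul_one] at this
    have hsq : ‖xb t - xstar‖ ^ 2 ≤ (Real.sqrt K * Real.exp (-(ν / 4) * t)) ^ 2 := by
      have h1 : (Real.sqrt K * Real.exp (-(ν / 4) * t)) ^ 2
          = K * Real.exp (-(ν / 4) * t) ^ 2 := by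
        rw [mul_pow, Real.sq_sqrt hKnn]
      have h2 : Real.exp (-(ν / 4) * t) ^ 2 = a⁻¹ := by
        rw [sq_exp', hadef, ← Real.exp_neg]
        congr 1; ring
      rw [h1, h2]
      have h3 : ‖xb t - xstar‖ ^ 2 = r2 t := by rw [hr2def]
      rw [h3]
      exact hKa
    exact (pow_le_pow_iff_left₀ (norm_nonneg _) (by positivity) two_ne_zero).mp hsq
  have hdelt : ‖x i t - xb t‖ ≤ D * Real.exp (-(ν / 4) * t) := by
    have h1 := hdel i t ht
    have h2 : Real.exp (-lam1 * t) ≤ Real.exp (-(ν / 4) * t) := by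
      apply Real.exp_le_exp.mpr
      nlinarith
    calc ‖x i t - xb t‖ ≤ D * Real.exp (-lam1 * t) := h1
      _ ≤ D * Real.exp (-(ν / 4) * t) := mul_le_mul_of_nonneg_left h2 hD0
  have htr : ‖x i t - xstar‖ ≤ ‖x i t - xb t‖ + ‖xb t - xstar‖ := by
    have := dist_triangle (x i t) (xb t) xstar
    simpa [dist_eq_norm] using this
  calc ‖x i t - xstar‖ ≤ ‖x i t - xb t‖ + ‖xb t - xstar‖ := htr
    _ ≤ D * Real.exp (-(ν / 4) * t) + Real.sqrt K * Real.exp (-(ν / 4) * t) :=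
        add_le_add hdelt hxbb
    _ ≤ (D + Real.sqrt K + 1) * Real.exp (-(ν / 4) * t) := by
        nlinarith [Real.exp_pos (-(ν / 4) * t)]
end

section
/- Consider the deterministic continuous-time EASGD system ẋⁱ = -∇f(xⁱ) + k(x̃ - xⁱ) for i = 1,…,p and x̃̇ = kp(x• - x̃), where f is λ-strongly convex, k > 0, and x• is the mean of the xⁱ. On the synchronized subspace, the reduced system (ẏ, x̃̇) = (-∇f(y) + k(x̃ - y), kp(y - x̃)) has generalized Jacobian under the metric transformation Θ = diag(√p·I, I) which is symmetric and uniformly negative definite; consequently all xⁱ and x̃ converge globally exponentially to (x*, x*) where x* is the unique minimizer of f. -/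
open scoped RealInnerProductSpace
open Finset

private theorem scalar1 (lam k q s a b i h γ : ℝ) (hlam : 0 < lam) (hk : 0 < k) (hq : 1 ≤ q)
    (hs : s ^ 2 = q) (hs0 : 0 ≤ s) (hh : lam * a ^ 2 ≤ h) (hi : i ≤ a * b)
    (hγd : γ * (lam + k + k * q) = lam * k * q) (hγ0 : 0 < γ) :
    -h - k * a ^ 2 + 2 * s * k * i - k * q * b ^ 2 ≤ -γ * (a ^ 2 + b ^ 2) := by
  subst hs
  have hd : 0 < lam + k + k * s ^ 2 := by nlinarith
  have hA : 0 < lam + k - γ := by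
    nlinarith [hd, hq, mul_pos hk hk, sq_nonneg (lam + k), mul_pos hlam hk]
  have key : γ * (lam + k + k * s ^ 2) * b ^ 2 = lam * k * s ^ 2 * b ^ 2 := by rw [hγd]
  nlinarith [sq_nonneg ((lam + k - γ) * a - s * k * b), sq_nonneg (γ * b), key,
    mul_nonneg hA.le (mul_nonneg (mul_nonneg hs0 hk.le) (sub_nonneg.2 hi)),
    mul_nonneg hA.le (sub_nonneg.2 hh)]

private theorem scalar2 (lam k q γ S A B i G : ℝ) (hlam : 0 < lam) (hk : 0 < k) (hq : 1 ≤ q)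
    (hG : lam * S ≤ G) (hi : i ≤ A * B) (hSA : q * A ^ 2 ≤ S)
    (hγ1 : γ * (q + 2) ≤ 2 * lam * q) (hγ2 : γ ≤ k * q) (hγ0 : 0 < γ)
    (hS : 0 ≤ S) :
    -(2 * G) - 2 * k * S + 4 * k * q * i - 2 * k * q * B ^ 2 ≤ -γ * (S + B ^ 2) := by
  have hq0 : (0:ℝ) < q := lt_of_lt_of_le one_pos hq
  have h1 : 0 ≤ q * (G - lam * S) := mul_nonneg hq0.le (by linarith)
  have h2 : 0 ≤ q * (k * q * (A * B - i)) :=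
    mul_nonneg hq0.le (mul_nonneg (mul_nonneg hk.le hq0.le) (by linarith))
  have h3 : 0 ≤ q * k * (S - q * A ^ 2) := mul_nonneg (mul_nonneg hq0.le hk.le) (by linarith)
  have h4 : 0 ≤ q * (k * q - γ) * (A - B) ^ 2 :=
    mul_nonneg (mul_nonneg hq0.le (by linarith)) (sq_nonneg _)
  have h5 : 0 ≤ γ * q * (2 * A - B) ^ 2 :=
    mul_nonneg (mul_nonneg hγ0.le hq0.le) (sq_nonneg _)
  have h6 : 0 ≤ (2 * lam * q - γ * (q + 2)) * S := mul_nonneg (by linarith) hS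
  have h7 : 0 ≤ γ * (S - q * A ^ 2) := mul_nonneg hγ0.le (by linarith)
  nlinarith [h1, h2, h3, h4, h5, h6, h7, hq0]

private theorem strong_mono {n : ℕ} (f : EuclideanSpace ℝ (Fin n) → ℝ) (lam : ℝ)
    (hf : ContDiff ℝ 2 f)
    (hconv : ∀ x v : EuclideanSpace ℝ (Fin n),
      lam * ‖v‖ ^ 2 ≤ ⟪v, fderiv ℝ (gradient f) x v⟫)
    (u w : EuclideanSpace ℝ (Fin n)) :
    lam * ‖u - w‖ ^ 2 ≤ ⟪u - w, gradient f u - gradient f w⟫ := by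
  have hg : ContDiff ℝ 1 (gradient f) := by
    have h1 : ContDiff ℝ 1 (fderiv ℝ f) := hf.fderiv_right (by norm_num)
    have h2 : gradient f = fun x => (InnerProductSpace.toDual ℝ _).symm (fderiv ℝ f x) := rfl
    rw [h2]
    exact (InnerProductSpace.toDual ℝ _).symm.contDiff.comp h1
  have hgd : Differentiable ℝ (gradient f) := hg.differentiable (by norm_num)
  set d := u - w with hd
  have hc : ∀ t : ℝ, HasDerivAt (fun t : ℝ => w + t • d) d t := fun t => by
    simpa using ((hasDerivAt_id t).smul_const d).const_add w
  have hφ : ∀ t : ℝ, HasDerivAt (fun t : ℝ => ⟪d, gradient f (w + t • d)⟫)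
      ⟪d, fderiv ℝ (gradient f) (w + t • d) d⟫ t := by
    intro t
    have h2 : HasDerivAt (fun t : ℝ => gradient f (w + t • d))
        (fderiv ℝ (gradient f) (w + t • d) d) t :=
      by have := ((hgd (w + t • d)).hasFDerivAt).comp_hasDerivAt t (hc t); exact this
    simpa using (HasDerivAt.inner ℝ (hasDerivAt_const t d) h2)
  have hψ : ∀ t : ℝ, HasDerivAt
      (fun t : ℝ => ⟪d, gradient f (w + t • d)⟫ - lam * ‖d‖ ^ 2 * t)
      (⟪d, fderiv ℝ (gradient f) (w + t • d) d⟫ - lam * ‖d‖ ^ 2) t := by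
    intro t
    simpa using (hφ t).fun_sub ((hasDerivAt_id t).const_mul (lam * ‖d‖ ^ 2))
  have mono : Monotone (fun t : ℝ => ⟪d, gradient f (w + t • d)⟫ - lam * ‖d‖ ^ 2 * t) := by
    refine monotone_of_deriv_nonneg (fun t => (hψ t).differentiableAt) ?_
    intro t
    rw [(hψ t).deriv]
    have := hconv (w + t • d) d
    linarith
  have h01 := mono zero_le_one
  simp only [zero_smul, add_zero, one_smul, mul_zero, mul_one, sub_zero] at h01
  have hwd : w + d = u := by rw [hd]; abel
  rw [hwd] at h01
  rw [inner_sub_right]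
  linarith

/-- Deterministic continuous-time EASGD: for `λ`-strongly convex `f`, the generalized
Jacobian of the reduced system under `Θ = diag(√p·I, I)` is uniformly negative
definite, and all agents `xⁱ` and the quorum variable `x̃` converge globally
exponentially to the unique minimizer `x*`. -/
theorem stmt_6 (n p : ℕ) (hp : 0 < p)
    (f : EuclideanSpace ℝ (Fin n) → ℝ) (lam k : ℝ) (hlam : 0 < lam) (hk : 0 < k)
    (hf : ContDiff ℝ 2 f)
    (hconv : ∀ x v : EuclideanSpace ℝ (Fin n),
      lam * ‖v‖ ^ 2 ≤ ⟪v, fderiv ℝ (gradient f) x v⟫)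
    (xstar : EuclideanSpace ℝ (Fin n)) (hxstar : gradient f xstar = 0)
    (x : Fin p → ℝ → EuclideanSpace ℝ (Fin n))
    (xt : ℝ → EuclideanSpace ℝ (Fin n))
    (hx : ∀ (i : Fin p) (t : ℝ),
      HasDerivAt (x i) (-gradient f (x i t) + k • (xt t - x i t)) t)
    (hxt : ∀ t : ℝ,
      HasDerivAt xt ((k * p) • (((p : ℝ)⁻¹ • ∑ i : Fin p, x i t) - xt t)) t) :
    -- uniform negative definiteness of the generalized Jacobian Θ J Θ⁻¹
    (∃ γ > (0 : ℝ), ∀ (y v w : EuclideanSpace ℝ (Fin n)),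
      -⟪v, fderiv ℝ (gradient f) y v⟫ - k * ‖v‖ ^ 2
          + 2 * Real.sqrt p * k * ⟪v, w⟫ - k * p * ‖w‖ ^ 2
        ≤ -γ * (‖v‖ ^ 2 + ‖w‖ ^ 2)) ∧
    -- global exponential convergence of all agents and the quorum variable to x*
    (∃ C > (0 : ℝ), ∃ γ > (0 : ℝ), ∀ t : ℝ, 0 ≤ t →
      (∀ i : Fin p, ‖x i t - xstar‖ ≤ C * Real.exp (-γ * t)) ∧
      ‖xt t - xstar‖ ≤ C * Real.exp (-γ * t)) := by
  have hq1 : (1:ℝ) ≤ (p:ℝ) := by exact_mod_cast hp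
  have hq0 : (0:ℝ) < (p:ℝ) := lt_of_lt_of_le one_pos hq1
  have hp0 : ((p:ℝ)) ≠ 0 := hq0.ne'
  constructor
  · -- part 1
    have hd : (0:ℝ) < lam + k + k * p := by positivity
    refine ⟨lam * k * p / (lam + k + k * p), div_pos (by positivity) hd, ?_⟩
    intro y v w
    exact scalar1 lam k p (Real.sqrt p) ‖v‖ ‖w‖ ⟪v, w⟫ _ _ hlam hk hq1
      (Real.sq_sqrt hq0.le) (Real.sqrt_nonneg _) (hconv y v) (real_inner_le_norm v w)
      (div_mul_cancel₀ _ hd.ne') (div_pos (by positivity) hd)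
  · -- part 2
    set γ : ℝ := min (2 * lam * p / ((p:ℝ) + 2)) (k * p) with hγdef
    have hp2 : (0:ℝ) < (p:ℝ) + 2 := by positivity
    have hγ0 : 0 < γ := lt_min (by positivity) (by positivity)
    have hγ1 : γ * ((p:ℝ) + 2) ≤ 2 * lam * p := by
      calc γ * ((p:ℝ) + 2) ≤ (2 * lam * p / ((p:ℝ) + 2)) * ((p:ℝ) + 2) :=
            mul_le_mul_of_nonneg_right (min_le_left _ _) hp2.le
        _ = 2 * lam * p := div_mul_cancel₀ _ hp2.ne'
    have hγ2 : γ ≤ k * p := min_le_right _ _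
    -- the Lyapunov function
    set V : ℝ → ℝ := fun t =>
      (∑ i : Fin p, ⟪x i t - xstar, x i t - xstar⟫) + ⟪xt t - xstar, xt t - xstar⟫ with hVdef
    have hVt : ∀ t : ℝ, HasDerivAt V
        ((∑ i : Fin p,
            (⟪x i t - xstar, -gradient f (x i t) + k • (xt t - x i t)⟫
              + ⟪-gradient f (x i t) + k • (xt t - x i t), x i t - xstar⟫))
          + (⟪xt t - xstar, (k * p) • (((p:ℝ)⁻¹ • ∑ i : Fin p, x i t) - xt t)⟫
              + ⟪(k * p) • (((p:ℝ)⁻¹ • ∑ i : Fin p, x i t) - xt t), xt t - xstar⟫)) t := by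
      intro t
      exact (HasDerivAt.fun_sum (fun i _ =>
          HasDerivAt.inner ℝ ((hx i t).sub_const xstar) ((hx i t).sub_const xstar))).add
        (HasDerivAt.inner ℝ ((hxt t).sub_const xstar) ((hxt t).sub_const xstar))
    have hVnonneg : ∀ t, 0 ≤ V t := by
      intro t
      exact add_nonneg (Finset.sum_nonneg fun i _ => real_inner_self_nonneg)
        real_inner_self_nonneg
    -- derivative bound
    have hbound : ∀ t : ℝ, deriv V t ≤ -γ * V t := by
      intro t
      rw [(hVt t).deriv]
      set b := xt t - xstar with hbdef
      set m : EuclideanSpace ℝ (Fin n) := (p:ℝ)⁻¹ • ∑ i : Fin p, (x i t - xstar) with hmdef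
      have hsum : ∑ i : Fin p, x i t = (∑ i : Fin p, (x i t - xstar)) + (p:ℝ) • xstar := by
        rw [Finset.sum_sub_distrib]
        simp [Finset.sum_const, Finset.card_univ, ← Nat.cast_smul_eq_nsmul ℝ]
      have hmb : ((p:ℝ)⁻¹ • ∑ i : Fin p, x i t) - xt t = m - b := by
        rw [hsum, smul_add, smul_smul, inv_mul_cancel₀ hp0, one_smul, hmdef, hbdef]
        abel
      have hsm : (∑ i : Fin p, (x i t - xstar)) = (p:ℝ) • m := by
        rw [hmdef, smul_inv_smul₀ hp0]
      -- summand identities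
      have hsummand : ∀ i : Fin p,
          ⟪x i t - xstar, -gradient f (x i t) + k • (xt t - x i t)⟫
            + ⟪-gradient f (x i t) + k • (xt t - x i t), x i t - xstar⟫
          = -(2 * ⟪x i t - xstar, gradient f (x i t) - gradient f xstar⟫)
            + 2 * k * ⟪x i t - xstar, b⟫
            - 2 * k * ⟪x i t - xstar, x i t - xstar⟫ := by
        intro i
        have hx1 : xt t - x i t = b - (x i t - xstar) := by rw [hbdef]; abel
        have c1 := real_inner_comm (-gradient f (x i t) + k • (xt t - x i t)) (x i t - xstar)
        have e1 : ⟪x i t - xstar, -gradient f (x i t) + k • (xt t - x i t)⟫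
            = -⟪x i t - xstar, gradient f (x i t)⟫ + k * ⟪x i t - xstar, b⟫
              - k * ⟪x i t - xstar, x i t - xstar⟫ := by
          rw [hx1]
          simp only [inner_add_right, inner_neg_right, real_inner_smul_right, inner_sub_right]
          ring
        rw [hxstar, sub_zero]
        linarith [c1, e1]
      have hquorum :
          ⟪b, (k * p) • (((p:ℝ)⁻¹ • ∑ i : Fin p, x i t) - xt t)⟫
            + ⟪(k * p) • (((p:ℝ)⁻¹ • ∑ i : Fin p, x i t) - xt t), b⟫
          = 2 * (k * p) * ⟪m, b⟫ - 2 * (k * p) * ⟪b, b⟫ := by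
        have c2 := real_inner_comm ((k * (p:ℝ)) • (((p:ℝ)⁻¹ • ∑ i : Fin p, x i t) - xt t)) b
        have e2 : ⟪b, (k * (p:ℝ)) • (((p:ℝ)⁻¹ • ∑ i : Fin p, x i t) - xt t)⟫
            = k * (p:ℝ) * ⟪b, m⟫ - k * (p:ℝ) * ⟪b, b⟫ := by
          rw [hmb]
          simp only [real_inner_smul_right, inner_sub_right]
          ring
        linear_combination (-1 : ℝ) * c2 + 2 * e2 + 2 * (k * (p:ℝ)) * (real_inner_comm m b)
      rw [Finset.sum_congr rfl (fun i _ => hsummand i), hquorum]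
      -- scalars
      set S : ℝ := ∑ i : Fin p, ⟪x i t - xstar, x i t - xstar⟫ with hSdef
      set G : ℝ := ∑ i : Fin p, ⟪x i t - xstar, gradient f (x i t) - gradient f xstar⟫
        with hGdef
      have hsum_split :
          (∑ i : Fin p,
            (-(2 * ⟪x i t - xstar, gradient f (x i t) - gradient f xstar⟫)
              + 2 * k * ⟪x i t - xstar, b⟫
              - 2 * k * ⟪x i t - xstar, x i t - xstar⟫))
          = -(2 * G) + 2 * k * ((p:ℝ) * ⟪m, b⟫) - 2 * k * S := by
        rw [Finset.sum_sub_distrib, Finset.sum_add_distrib, Finset.sum_neg_distrib,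
          ← Finset.mul_sum, ← Finset.mul_sum, ← Finset.mul_sum]
        have : (∑ i : Fin p, ⟪x i t - xstar, b⟫) = (p:ℝ) * ⟪m, b⟫ := by
          rw [← sum_inner, hsm, real_inner_smul_left]
        rw [this]
      rw [hsum_split]
      -- convert inner products of self to norms
      have hSnorm : S = ∑ i : Fin p, ‖x i t - xstar‖ ^ 2 := by
        rw [hSdef]
        exact Finset.sum_congr rfl fun i _ => real_inner_self_eq_norm_sq _
      have hbnorm : ⟪b, b⟫ = ‖b‖ ^ 2 := real_inner_self_eq_norm_sq _
      have hVval : V t = S + ⟪b, b⟫ := rfl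
      have hG : lam * S ≤ G := by
        rw [hSnorm, hGdef, Finset.mul_sum]
        exact Finset.sum_le_sum fun i _ => strong_mono f lam hf hconv (x i t) xstar
      have hSA : (p:ℝ) * ‖m‖ ^ 2 ≤ S := by
        have h1 : ‖∑ i : Fin p, (x i t - xstar)‖ ≤ ∑ i : Fin p, ‖x i t - xstar‖ :=
          norm_sum_le _ _
        have h2 : (∑ i : Fin p, ‖x i t - xstar‖) ^ 2
            ≤ (p:ℝ) * ∑ i : Fin p, ‖x i t - xstar‖ ^ 2 := by
          have := sq_sum_le_card_mul_sum_sq (s := (Finset.univ : Finset (Fin p)))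
            (f := fun i => ‖x i t - xstar‖)
          simpa [Finset.card_univ] using this
        have h3 : ‖∑ i : Fin p, (x i t - xstar)‖ ^ 2 ≤ (p:ℝ) * S := by
          rw [hSnorm]
          calc ‖∑ i : Fin p, (x i t - xstar)‖ ^ 2
              ≤ (∑ i : Fin p, ‖x i t - xstar‖) ^ 2 := by
                apply pow_le_pow_left₀ (norm_nonneg _) h1
            _ ≤ _ := h2
        have hm : ‖m‖ ^ 2 = ((p:ℝ)⁻¹) ^ 2 * ‖∑ i : Fin p, (x i t - xstar)‖ ^ 2 := by
          rw [hmdef, norm_smul, mul_pow]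
          congr 1
          rw [Real.norm_eq_abs, sq_abs]
        rw [hm]
        have := mul_le_mul_of_nonneg_left h3 (by positivity : (0:ℝ) ≤ (p:ℝ) * ((p:ℝ)⁻¹) ^ 2)
        calc (p:ℝ) * (((p:ℝ)⁻¹) ^ 2 * ‖∑ i : Fin p, (x i t - xstar)‖ ^ 2)
            = (p:ℝ) * ((p:ℝ)⁻¹) ^ 2 * ‖∑ i : Fin p, (x i t - xstar)‖ ^ 2 := by ring
          _ ≤ (p:ℝ) * ((p:ℝ)⁻¹) ^ 2 * ((p:ℝ) * S) := by
                exact mul_le_mul_of_nonneg_left h3 (by positivity)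
          _ = S := by field_simp
      have hip : ⟪m, b⟫ ≤ ‖m‖ * ‖b‖ := real_inner_le_norm m b
      have hS0 : 0 ≤ S := by
        rw [hSnorm]; exact Finset.sum_nonneg fun i _ => sq_nonneg _
      rw [hVval, hbnorm]
      have := scalar2 lam k (p:ℝ) γ S ‖m‖ ‖b‖ ⟪m, b⟫ G hlam hk hq1 hG hip hSA hγ1 hγ2 hγ0 hS0
      linarith
    -- Gronwall via W t = V t * exp (γ t)
    have hW : ∀ t : ℝ, HasDerivAt (fun t => V t * Real.exp (γ * t))
        (deriv V t * Real.exp (γ * t) + V t * (Real.exp (γ * t) * γ)) t := by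
      intro t
      have hE : HasDerivAt (fun t : ℝ => Real.exp (γ * t)) (Real.exp (γ * t) * γ) t := by
        have := ((hasDerivAt_id t).const_mul γ).exp
        simpa using this
      exact ((hVt t).differentiableAt.hasDerivAt).mul hE
    have hanti : Antitone (fun t => V t * Real.exp (γ * t)) := by
      refine antitone_of_deriv_nonpos (fun t => (hW t).differentiableAt) ?_
      intro t
      rw [(hW t).deriv]
      have h1 := hbound t
      have h2 := Real.exp_pos (γ * t)
      nlinarith
    have hdecay : ∀ t : ℝ, 0 ≤ t → V t ≤ V 0 * Real.exp (-γ * t) := by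
      intro t ht
      have h1 : V t * Real.exp (γ * t) ≤ V 0 * Real.exp (γ * 0) := hanti ht
      rw [mul_zero, Real.exp_zero, mul_one] at h1
      have h2 := Real.exp_pos (γ * t)
      rw [neg_mul, Real.exp_neg, ← div_eq_mul_inv, le_div_iff₀ h2]
      exact h1
    -- conclude
    refine ⟨Real.sqrt (V 0) + 1, by positivity, γ / 2, by positivity, ?_⟩
    intro t ht
    have key : ∀ z : EuclideanSpace ℝ (Fin n), ‖z‖ ^ 2 ≤ V t →
        ‖z‖ ≤ (Real.sqrt (V 0) + 1) * Real.exp (-(γ / 2) * t) := by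
      intro z hz
      have h1 : ‖z‖ ^ 2 ≤ V 0 * Real.exp (-γ * t) := le_trans hz (hdecay t ht)
      have h2 : ‖z‖ ≤ Real.sqrt (V 0 * Real.exp (-γ * t)) := by
        rw [Real.le_sqrt (norm_nonneg _)
          (mul_nonneg (hVnonneg 0) (Real.exp_pos _).le)]
        exact h1
      calc ‖z‖ ≤ Real.sqrt (V 0 * Real.exp (-γ * t)) := h2
        _ = Real.sqrt (V 0) * Real.sqrt (Real.exp (-γ * t)) :=
            Real.sqrt_mul (hVnonneg 0) _
        _ = Real.sqrt (V 0) * Real.exp (-γ * t / 2) := by rw [Real.exp_half]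
        _ = Real.sqrt (V 0) * Real.exp (-(γ / 2) * t) := by ring_nf
        _ ≤ (Real.sqrt (V 0) + 1) * Real.exp (-(γ / 2) * t) := by
            have := Real.exp_pos (-(γ / 2) * t)
            nlinarith [Real.sqrt_nonneg (V 0)]
    constructor
    · intro i
      apply key
      have hVt' : V t = (∑ j : Fin p, ⟪x j t - xstar, x j t - xstar⟫)
          + ⟪xt t - xstar, xt t - xstar⟫ := rfl
      rw [hVt', ← real_inner_self_eq_norm_sq]
      have h1 : ∀ j : Fin p, (0:ℝ) ≤ ⟪x j t - xstar, x j t - xstar⟫ :=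
        fun j => real_inner_self_nonneg
      have h2 : ⟪x i t - xstar, x i t - xstar⟫
          ≤ ∑ j : Fin p, ⟪x j t - xstar, x j t - xstar⟫ :=
        Finset.single_le_sum (fun j _ => h1 j) (Finset.mem_univ i)
      have h3 : (0:ℝ) ≤ ⟪xt t - xstar, xt t - xstar⟫ := real_inner_self_nonneg
      linarith
    · apply key
      have hVt' : V t = (∑ j : Fin p, ⟪x j t - xstar, x j t - xstar⟫)
          + ⟪xt t - xstar, xt t - xstar⟫ := rfl
      rw [hVt', ← real_inner_self_eq_norm_sq]
      have h1 : (0:ℝ) ≤ ∑ j : Fin p, ⟪x j t - xstar, x j t - xstar⟫ :=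
        Finset.sum_nonneg fun j _ => real_inner_self_nonneg
      linarith
end

section
/- Let μ > 0, 0 < δ < 1, and let H be a symmetric n×n matrix with λ̲I ⪯ H ⪯ λ̄I where 0 < λ̲ ≤ λ̄. Consider the momentum-system Jacobian J = [[0, I],[-H, -μI]] and the metric transformation Θ = [[aI, 0],[δμI, I]] with a = √((λ̲ + λ̄ + 2(δ-1)δμ²)/2) assumed real and positive. Then the symmetric part of ΘJΘ⁻¹ is negative definite provided 4δ(1-δ)μ² > (λ̄-λ̲)²/(2(λ̲+λ̄+2(δ-1)δμ²)). -/
set_option maxHeartbeats 1000000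

open Matrix

private lemma aux_sym {n : ℕ} (B : Matrix (Fin n) (Fin n) ℝ) (hB : Bᵀ = B)
    (p q : Fin n → ℝ) : p ⬝ᵥ B *ᵥ q = q ⬝ᵥ B *ᵥ p := by
  conv_lhs => rw [dotProduct_mulVec, dotProduct_comm, ← hB, vecMul_transpose]

private lemma aux_bilin {n : ℕ} (B : Matrix (Fin n) (Fin n) ℝ) (hB : Bᵀ = B) (r : ℝ)
    (h1 : (r • (1 : Matrix (Fin n) (Fin n) ℝ) - B).PosSemidef)
    (h2 : (r • (1 : Matrix (Fin n) (Fin n) ℝ) + B).PosSemidef)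
    (u v : Fin n → ℝ) :
    u ⬝ᵥ B *ᵥ v ≤ r / 2 * (u ⬝ᵥ u + v ⬝ᵥ v) := by
  have e1 := h1.dotProduct_mulVec_nonneg (u + v)
  have e2 := h2.dotProduct_mulVec_nonneg (u - v)
  simp only [star_trivial, sub_mulVec, add_mulVec, mulVec_sub, mulVec_add,
    smul_mulVec, one_mulVec, dotProduct_add, add_dotProduct, dotProduct_sub,
    sub_dotProduct, dotProduct_smul, smul_eq_mul] at e1 e2
  have hs := aux_sym B hB u v
  have hc := dotProduct_comm u v
  linarith

private lemma aux_bilin' {n : ℕ} (B : Matrix (Fin n) (Fin n) ℝ) (hB : Bᵀ = B) (r : ℝ)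
    (h1 : (r • (1 : Matrix (Fin n) (Fin n) ℝ) - B).PosSemidef)
    (h2 : (r • (1 : Matrix (Fin n) (Fin n) ℝ) + B).PosSemidef)
    (s : ℝ) (hs : 0 < s) (u v : Fin n → ℝ) :
    u ⬝ᵥ B *ᵥ v ≤ r / 2 * (s * (u ⬝ᵥ u) + s⁻¹ * (v ⬝ᵥ v)) := by
  have key := aux_bilin B hB r h1 h2 (Real.sqrt s • u) ((Real.sqrt s)⁻¹ • v)
  have hss : Real.sqrt s * Real.sqrt s = s := Real.mul_self_sqrt hs.le
  have hsp : 0 < Real.sqrt s := Real.sqrt_pos.2 hs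
  simp only [smul_dotProduct, dotProduct_smul, mulVec_smul, smul_eq_mul] at key
  have h1' : (Real.sqrt s)⁻¹ * (Real.sqrt s * (u ⬝ᵥ B *ᵥ v)) = u ⬝ᵥ B *ᵥ v := by
    field_simp
  have h2' : Real.sqrt s * (Real.sqrt s * (u ⬝ᵥ u)) = s * (u ⬝ᵥ u) := by
    rw [← mul_assoc, hss]
  have h3' : (Real.sqrt s)⁻¹ * ((Real.sqrt s)⁻¹ * (v ⬝ᵥ v)) = s⁻¹ * (v ⬝ᵥ v) := by
    rw [← mul_assoc, ← mul_inv, hss]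
  rw [h1', h2', h3'] at key
  linarith

/-- Contraction metric for the momentum system: with `J = [[0, I],[-H, -μI]]`,
`Θ = [[aI, 0],[δμI, I]]`, and `a = √((λ̲+λ̄+2(δ-1)δμ²)/2)`, the symmetric part of
`ΘJΘ⁻¹` is negative definite provided `4δ(1-δ)μ² > (λ̄-λ̲)²/(2(λ̲+λ̄+2(δ-1)δμ²))`. -/
theorem stmt_8 (n : ℕ) (H : Matrix (Fin n) (Fin n) ℝ) (hH : H.IsHermitian)
    (lamL lamU mu delta : ℝ) (hlamL : 0 < lamL) (hle : lamL ≤ lamU)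
    (hmu : 0 < mu) (hdelta : delta ∈ Set.Ioo (0 : ℝ) 1)
    (hHlb : (H - lamL • (1 : Matrix (Fin n) (Fin n) ℝ)).PosSemidef)
    (hHub : (lamU • (1 : Matrix (Fin n) (Fin n) ℝ) - H).PosSemidef)
    (a : ℝ) (ha : a = Real.sqrt ((lamL + lamU + 2 * (delta - 1) * delta * mu ^ 2) / 2))
    (hareal : 0 < lamL + lamU + 2 * (delta - 1) * delta * mu ^ 2)
    (hcond : 4 * delta * (1 - delta) * mu ^ 2
      > (lamU - lamL) ^ 2 / (2 * (lamL + lamU + 2 * (delta - 1) * delta * mu ^ 2))) :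
    (-( (2⁻¹ : ℝ) • (((Matrix.fromBlocks (a • 1) 0 ((delta * mu) • 1) 1 :
            Matrix (Fin n ⊕ Fin n) (Fin n ⊕ Fin n) ℝ)
          * (Matrix.fromBlocks 0 1 (-H) (-(mu • 1)))
          * (Matrix.fromBlocks (a • 1) 0 ((delta * mu) • 1) 1)⁻¹)
        + ((Matrix.fromBlocks (a • 1) 0 ((delta * mu) • 1) 1 :
            Matrix (Fin n ⊕ Fin n) (Fin n ⊕ Fin n) ℝ)
          * (Matrix.fromBlocks 0 1 (-H) (-(mu • 1)))
          * (Matrix.fromBlocks (a • 1) 0 ((delta * mu) • 1) 1)⁻¹).transpose))).PosDef := by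
  obtain ⟨hd0, hd1⟩ := hdelta
  have hHt : Hᵀ = H := hH
  have ha0 : 0 < a := by
    rw [ha]; exact Real.sqrt_pos.2 (by linarith)
  have ha2 : a * a = (lamL + lamU) / 2 + (delta - 1) * delta * mu ^ 2 := by
    rw [ha, Real.mul_self_sqrt (by linarith)]; ring
  -- the explicit inverse
  have hinv : (Matrix.fromBlocks (a • 1) 0 ((delta * mu) • 1) 1 :
      Matrix (Fin n ⊕ Fin n) (Fin n ⊕ Fin n) ℝ)⁻¹
      = fromBlocks (a⁻¹ • 1) 0 ((-(delta*mu/a)) • 1) 1 := by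
    apply inv_eq_right_inv
    rw [fromBlocks_multiply, ← fromBlocks_one, fromBlocks_inj]
    refine ⟨?_, ?_, ?_, ?_⟩
    · simp [smul_smul, mul_inv_cancel₀ ha0.ne', inv_mul_cancel₀ ha0.ne']
    · simp
    · simp [Matrix.smul_mul, Matrix.mul_smul, smul_smul, ← neg_smul, ← add_smul,
        div_eq_mul_inv, mul_comm]
    · simp
  rw [hinv]
  -- the symmetric part as an explicit block matrix
  have hKey : (-( (2⁻¹ : ℝ) • (((Matrix.fromBlocks (a • 1) 0 ((delta * mu) • 1) 1 :
            Matrix (Fin n ⊕ Fin n) (Fin n ⊕ Fin n) ℝ)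
          * (Matrix.fromBlocks 0 1 (-H) (-(mu • 1)))
          * (fromBlocks (a⁻¹ • 1) 0 ((-(delta*mu/a)) • 1) 1))
        + ((Matrix.fromBlocks (a • 1) 0 ((delta * mu) • 1) 1 :
            Matrix (Fin n ⊕ Fin n) (Fin n ⊕ Fin n) ℝ)
          * (Matrix.fromBlocks 0 1 (-H) (-(mu • 1)))
          * (fromBlocks (a⁻¹ • 1) 0 ((-(delta*mu/a)) • 1) 1)).transpose)))
      = fromBlocks ((delta*mu) • 1) ((-(2*a)⁻¹) • (((lamL+lamU)/2) • 1 - H))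
          ((-(2*a)⁻¹) • (((lamL+lamU)/2) • 1 - H)) (((1-delta)*mu) • 1) := by
    simp only [fromBlocks_multiply, fromBlocks_transpose, fromBlocks_add, fromBlocks_smul,
      fromBlocks_neg]
    rw [fromBlocks_inj]
    refine ⟨?_, ?_, ?_, ?_⟩ <;>
      simp only [Matrix.smul_mul, Matrix.mul_smul, Matrix.mul_one, Matrix.one_mul,
        Matrix.zero_mul, Matrix.mul_zero, smul_smul, transpose_smul, transpose_one, hHt,
        Matrix.neg_mul, Matrix.mul_neg, transpose_neg, transpose_add, add_zero, zero_add,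
        smul_zero, neg_zero, smul_add, smul_neg, neg_add_rev, neg_neg, smul_sub]
    case _ => match_scalars; field_simp; ring
    case _ =>
      match_scalars
      · field_simp; linear_combination (-2 : ℝ) * ha2
      · field_simp
    case _ =>
      match_scalars
      · field_simp; linear_combination (-2 : ℝ) * ha2
      · field_simp
    case _ => match_scalars; ring
  rw [hKey]
  -- set-up for positive definiteness
  set r : ℝ := (lamU - lamL) / 2 with hr
  set B : Matrix (Fin n) (Fin n) ℝ := ((lamL+lamU)/2) • 1 - H with hBdef
  have hBt : Bᵀ = B := by
    rw [hBdef, transpose_sub, transpose_smul, transpose_one, hHt]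
  have hB1 : (r • (1 : Matrix (Fin n) (Fin n) ℝ) - B).PosSemidef := by
    have : r • (1 : Matrix (Fin n) (Fin n) ℝ) - B = H - lamL • 1 := by
      rw [hBdef, hr]; match_scalars <;> ring
    rw [this]; exact hHlb
  have hB2 : (r • (1 : Matrix (Fin n) (Fin n) ℝ) + B).PosSemidef := by
    have : r • (1 : Matrix (Fin n) (Fin n) ℝ) + B = lamU • 1 - H := by
      rw [hBdef, hr]; match_scalars <;> ring
    rw [this]; exact hHub
  have hr0 : 0 ≤ r := by rw [hr]; linarith
  set s : ℝ := Real.sqrt (delta / (1 - delta)) with hsdef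
  have hs : 0 < s := Real.sqrt_pos.2 (div_pos hd0 (by linarith))
  have hs2 : s * s = delta / (1 - delta) := Real.mul_self_sqrt (div_pos hd0 (by linarith)).le
  have hss : s * s * (1 - delta) = delta := by
    rw [hs2, div_mul_cancel₀ _ (by linarith : (1:ℝ) - delta ≠ 0)]
  -- the crucial scalar inequality : r * r < 4 a² δ (1-δ) μ²
  have hkey : r * r < 4 * (a*a) * delta * (1-delta) * mu^2 := by
    have h4a : 2 * (lamL + lamU + 2 * (delta - 1) * delta * mu ^ 2) = 4 * (a*a) := by
      rw [ha2]; ring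
    rw [h4a] at hcond
    have hpos : 0 < 4 * (a*a) := by positivity
    rw [gt_iff_lt, div_lt_iff₀ hpos] at hcond
    rw [hr]
    linarith [hcond]
  -- the two coefficient inequalities
  have h1d : (0:ℝ) < 1 - delta := by linarith
  have h2a : (0:ℝ) < 2*a := by linarith
  have h2as : (0:ℝ) < 2*a*s := mul_pos h2a hs
  have haz : a ≠ 0 := ha0.ne'
  have hsz : s ≠ 0 := hs.ne'
  have hca : r * s / (2*a) < delta * mu := by
    rw [div_lt_iff₀ h2a]
    by_contra hcon
    push_neg at hcon
    have hp : 0 < delta * mu * (2*a) := mul_pos (mul_pos hd0 hmu) h2a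
    have hsq := mul_le_mul hcon hcon hp.le (hp.le.trans hcon)
    have t1 := mul_le_mul_of_nonneg_right hsq h1d.le
    have e : r*s*(r*s)*(1-delta) = r*r*(s*s*(1-delta)) := by ring
    rw [e, hss] at t1
    have t2 := mul_lt_mul_of_pos_right hkey hd0
    linarith [t1, t2]
  have hcb : r / (2*a*s) < (1-delta) * mu := by
    rw [div_lt_iff₀ h2as]
    by_contra hcon
    push_neg at hcon
    have hp : 0 < (1-delta) * mu * (2*a*s) := mul_pos (mul_pos h1d hmu) h2as
    have hsq := mul_le_mul hcon hcon hp.le (hp.le.trans hcon)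
    have t1 := mul_le_mul_of_nonneg_right hsq h1d.le
    have e : (1-delta)*mu*(2*a*s)*((1-delta)*mu*(2*a*s))*(1-delta)
        = ((1-delta)*mu*(2*a))*((1-delta)*mu*(2*a))*(s*s*(1-delta)) := by ring
    rw [e, hss] at t1
    have t2 := mul_lt_mul_of_pos_right hkey h1d
    linarith [t1, t2]
  rw [posDef_iff_dotProduct_mulVec]
  constructor
  · -- Hermitian
    show _ = _
    simp only [conjTranspose_eq_transpose_of_trivial, fromBlocks_transpose, transpose_smul,
      transpose_one, hBt]
  · intro z hz
    have hzx : z = Sum.elim (z ∘ Sum.inl) (z ∘ Sum.inr) := (Sum.elim_comp_inl_inr z).symm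
    set x : Fin n → ℝ := z ∘ Sum.inl with hx
    set y : Fin n → ℝ := z ∘ Sum.inr with hy
    have hq : star z ⬝ᵥ
        (fromBlocks ((delta*mu) • 1) ((-(2*a)⁻¹) • B) ((-(2*a)⁻¹) • B) (((1-delta)*mu) • 1)) *ᵥ z
        = delta*mu * (x ⬝ᵥ x) + (1-delta)*mu * (y ⬝ᵥ y)
          + (-(2*a)⁻¹) * (x ⬝ᵥ B *ᵥ y) + (-(2*a)⁻¹) * (y ⬝ᵥ B *ᵥ x) := by
      rw [star_trivial]
      conv_lhs => rw [hzx]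
      rw [fromBlocks_mulVec, sumElim_dotProduct_sumElim]
      simp only [smul_mulVec, one_mulVec, dotProduct_add, dotProduct_smul, smul_eq_mul,
        Sum.elim_comp_inl, Sum.elim_comp_inr]
      ring
    rw [hq]
    have hb2 : y ⬝ᵥ B *ᵥ x = x ⬝ᵥ B *ᵥ y := aux_sym B hBt y x
    rw [hb2]
    have hb1 : x ⬝ᵥ B *ᵥ y ≤ r / 2 * (s * (x ⬝ᵥ x) + s⁻¹ * (y ⬝ᵥ y)) :=
      aux_bilin' B hBt r hB1 hB2 s hs x y
    have hxx : 0 ≤ x ⬝ᵥ x := by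
      rw [dotProduct]; exact Finset.sum_nonneg fun i _ => mul_self_nonneg _
    have hyy : 0 ≤ y ⬝ᵥ y := by
      rw [dotProduct]; exact Finset.sum_nonneg fun i _ => mul_self_nonneg _
    have hone : 0 < x ⬝ᵥ x ∨ 0 < y ⬝ᵥ y := by
      by_contra hcon
      push_neg at hcon
      have hx0 : x ⬝ᵥ x = 0 := le_antisymm (hcon.1) hxx
      have hy0 : y ⬝ᵥ y = 0 := le_antisymm (hcon.2) hyy
      rw [dotProduct_self_eq_zero] at hx0 hy0
      apply hz
      rw [← Sum.elim_comp_inl_inr z, ← hx, ← hy, hx0, hy0]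
      simp
    have hba : -((2*a)⁻¹ * (r / 2 * (s * (x ⬝ᵥ x) + s⁻¹ * (y ⬝ᵥ y))))
        ≤ -((2*a)⁻¹ * (x ⬝ᵥ B *ᵥ y)) :=
      neg_le_neg (mul_le_mul_of_nonneg_left hb1 (inv_pos.2 h2a).le)
    have e1 : (2*a)⁻¹ * (r / 2 * (s * (x ⬝ᵥ x) + s⁻¹ * (y ⬝ᵥ y)))
        = r * s / (2*a) / 2 * (x ⬝ᵥ x) + r / (2*a*s) / 2 * (y ⬝ᵥ y) := by
      field_simp
    rw [e1] at hba
    have m1 : r * s / (2*a) * (x ⬝ᵥ x) ≤ delta * mu * (x ⬝ᵥ x) :=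
      mul_le_mul_of_nonneg_right hca.le hxx
    have m2 : r / (2*a*s) * (y ⬝ᵥ y) ≤ (1-delta) * mu * (y ⬝ᵥ y) :=
      mul_le_mul_of_nonneg_right hcb.le hyy
    rcases hone with hpx | hpy
    · have m1' : r * s / (2*a) * (x ⬝ᵥ x) < delta * mu * (x ⬝ᵥ x) :=
        mul_lt_mul_of_pos_right hca hpx
      linarith [hba, m1', m2]
    · have m2' : r / (2*a*s) * (y ⬝ᵥ y) < (1-delta) * mu * (y ⬝ᵥ y) :=
        mul_lt_mul_of_pos_right hcb hpy
      linarith [hba, m1, m2']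
end

section
/- Let J = [[-k₁I, I],[-H, -(m+k₂)I]] be a 2n×2n block matrix with H symmetric satisfying λ̲I ⪯ H ⪯ λ̄I, and k₁, k₂, m > 0. If k₁(m + k₂) > (1/4)max((1-λ̄)², (1-λ̲)²), then the symmetric part of J is negative definite. (The symmetric part has blocks [[-k₁I, (I-H)/2],[(I-H)/2, -(m+k₂)I]], and the criterion is αβ > ‖(I-H)/2‖² with α = k₁, β = m+k₂ and ‖(I-H)/2‖ = (1/2)max(|1-λ̄|, |1-λ̲|).) -/
open Matrix

private lemma sym_cross' {n : ℕ} (A : Matrix (Fin n) (Fin n) ℝ) (hA : Aᵀ = A) (x y : Fin n → ℝ) :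
    x ⬝ᵥ A *ᵥ y = y ⬝ᵥ A *ᵥ x := by
  rw [dotProduct_mulVec, ← vecMul_transpose, hA, dotProduct_comm]

private lemma cross_bound' {n : ℕ} (A : Matrix (Fin n) (Fin n) ℝ) (hA : Aᵀ = A) (c : ℝ)
    (hq : ∀ v : Fin n → ℝ, |v ⬝ᵥ A *ᵥ v| ≤ c * (v ⬝ᵥ v))
    (x y : Fin n → ℝ) (s : ℝ) (hs : 0 < s) :
    -((c / 2) * (s ^ 2 * (y ⬝ᵥ y) + s⁻¹ ^ 2 * (x ⬝ᵥ x))) ≤ y ⬝ᵥ A *ᵥ x := by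
  set u := s • y + s⁻¹ • x with hu
  set w := s • y - s⁻¹ • x with hw
  have hsy : x ⬝ᵥ A *ᵥ y = y ⬝ᵥ A *ᵥ x := sym_cross' A hA x y
  have hxy : x ⬝ᵥ y = y ⬝ᵥ x := dotProduct_comm x y
  have hss : s * s⁻¹ = 1 := mul_inv_cancel₀ hs.ne'
  have e1 : u ⬝ᵥ A *ᵥ u = s ^ 2 * (y ⬝ᵥ A *ᵥ y) + 2 * (y ⬝ᵥ A *ᵥ x) + s⁻¹ ^ 2 * (x ⬝ᵥ A *ᵥ x) := by
    simp only [hu, mulVec_add, mulVec_smul, dotProduct_add, add_dotProduct,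
      dotProduct_smul, smul_dotProduct, smul_eq_mul, hsy]
    linear_combination 2 * (y ⬝ᵥ A *ᵥ x) * hss
  have e2 : w ⬝ᵥ A *ᵥ w = s ^ 2 * (y ⬝ᵥ A *ᵥ y) - 2 * (y ⬝ᵥ A *ᵥ x) + s⁻¹ ^ 2 * (x ⬝ᵥ A *ᵥ x) := by
    simp only [hw, mulVec_sub, mulVec_smul, dotProduct_sub, sub_dotProduct,
      dotProduct_smul, smul_dotProduct, smul_eq_mul, hsy]
    linear_combination (-2 * (y ⬝ᵥ A *ᵥ x)) * hss
  have e3 : u ⬝ᵥ u = s ^ 2 * (y ⬝ᵥ y) + 2 * (y ⬝ᵥ x) + s⁻¹ ^ 2 * (x ⬝ᵥ x) := by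
    simp only [hu, dotProduct_add, add_dotProduct, dotProduct_smul, smul_dotProduct,
      smul_eq_mul, hxy]
    linear_combination 2 * (y ⬝ᵥ x) * hss
  have e4 : w ⬝ᵥ w = s ^ 2 * (y ⬝ᵥ y) - 2 * (y ⬝ᵥ x) + s⁻¹ ^ 2 * (x ⬝ᵥ x) := by
    simp only [hw, dotProduct_sub, sub_dotProduct, dotProduct_smul, smul_dotProduct,
      smul_eq_mul, hxy]
    linear_combination (-2 * (y ⬝ᵥ x)) * hss
  have B1 : -(c * (s ^ 2 * (y ⬝ᵥ y) + 2 * (y ⬝ᵥ x) + s⁻¹ ^ 2 * (x ⬝ᵥ x))) ≤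
      s ^ 2 * (y ⬝ᵥ A *ᵥ y) + 2 * (y ⬝ᵥ A *ᵥ x) + s⁻¹ ^ 2 * (x ⬝ᵥ A *ᵥ x) := by
    rw [← e1, ← e3]; exact (abs_le.mp (hq u)).1
  have B2 : s ^ 2 * (y ⬝ᵥ A *ᵥ y) - 2 * (y ⬝ᵥ A *ᵥ x) + s⁻¹ ^ 2 * (x ⬝ᵥ A *ᵥ x) ≤
      c * (s ^ 2 * (y ⬝ᵥ y) - 2 * (y ⬝ᵥ x) + s⁻¹ ^ 2 * (x ⬝ᵥ x)) := by
    rw [← e2, ← e4]; exact (abs_le.mp (hq w)).2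
  linarith [B1, B2]

set_option maxHeartbeats 1600000 in
/-- Synchronization condition for QSGD with momentum: for symmetric `H` with
`λ̲I ⪯ H ⪯ λ̄I` and `k₁, k₂, m > 0`, if `k₁(m+k₂) > (1/4)max((1-λ̄)², (1-λ̲)²)`
then the symmetric part of `J = [[-k₁I, I],[-H, -(m+k₂)I]]` is negative definite. -/
theorem stmt_16 (n : ℕ) (H : Matrix (Fin n) (Fin n) ℝ) (hH : H.IsHermitian)
    (lamL lamU k₁ k₂ m : ℝ) (hlamL : 0 < lamL) (hle : lamL ≤ lamU)
    (hk₁ : 0 < k₁) (hk₂ : 0 < k₂) (hm : 0 < m)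
    (hHlb : (H - lamL • (1 : Matrix (Fin n) (Fin n) ℝ)).PosSemidef)
    (hHub : (lamU • (1 : Matrix (Fin n) (Fin n) ℝ) - H).PosSemidef)
    (hcond : k₁ * (m + k₂) > (1 / 4) * max ((1 - lamU) ^ 2) ((1 - lamL) ^ 2)) :
    (-( (2⁻¹ : ℝ) •
      ((Matrix.fromBlocks (-(k₁ • 1)) 1 (-H) (-((m + k₂) • 1)) :
          Matrix (Fin n ⊕ Fin n) (Fin n ⊕ Fin n) ℝ)
        + (Matrix.fromBlocks (-(k₁ • 1)) 1 (-H) (-((m + k₂) • 1)) :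
          Matrix (Fin n ⊕ Fin n) (Fin n ⊕ Fin n) ℝ).transpose))).PosDef := by
  set J : Matrix (Fin n ⊕ Fin n) (Fin n ⊕ Fin n) ℝ :=
    Matrix.fromBlocks (-(k₁ • 1)) 1 (-H) (-((m + k₂) • 1)) with hJ
  have hHsym : Hᵀ = H := by
    have := hH; rwa [Matrix.IsHermitian, conjTranspose_eq_transpose_of_trivial] at this
  set A : Matrix (Fin n) (Fin n) ℝ := H - 1 with hAdef
  have hAsym : Aᵀ = A := by
    simp [hAdef, transpose_sub, hHsym]
  set c : ℝ := max |1 - lamU| |1 - lamL| with hc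
  have hc0 : 0 ≤ c := le_trans (abs_nonneg _) (le_max_left _ _)
  -- quadratic form bounds for H
  have hHq : ∀ v : Fin n → ℝ, lamL * (v ⬝ᵥ v) ≤ v ⬝ᵥ H *ᵥ v ∧ v ⬝ᵥ H *ᵥ v ≤ lamU * (v ⬝ᵥ v) := by
    intro v
    have h1 := hHlb.dotProduct_mulVec_nonneg v
    have h2 := hHub.dotProduct_mulVec_nonneg v
    simp only [star_trivial, sub_mulVec, smul_mulVec, one_mulVec, dotProduct_sub,
      dotProduct_smul, smul_eq_mul] at h1 h2
    constructor <;> linarith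
  have hq : ∀ v : Fin n → ℝ, |v ⬝ᵥ A *ᵥ v| ≤ c * (v ⬝ᵥ v) := by
    intro v
    have hv0 : 0 ≤ v ⬝ᵥ v := by
      simpa [star_trivial] using dotProduct_star_self_nonneg v
    have hAv : v ⬝ᵥ A *ᵥ v = v ⬝ᵥ H *ᵥ v - v ⬝ᵥ v := by
      simp [hAdef, sub_mulVec, dotProduct_sub, one_mulVec]
    have hU : |1 - lamU| ≤ c := le_max_left _ _
    have hL : |1 - lamL| ≤ c := le_max_right _ _
    have hU' : lamU - 1 ≤ |1 - lamU| := by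
      rw [abs_sub_comm]; exact le_abs_self _
    have hL' : 1 - lamL ≤ |1 - lamL| := le_abs_self _
    rw [abs_le]
    have := (hHq v).1
    have := (hHq v).2
    constructor
    · nlinarith [mul_le_mul_of_nonneg_right hL hv0]
    · nlinarith [mul_le_mul_of_nonneg_right hU hv0]
  -- the strict inequality c < 2 √k₁ √(m+k₂)
  set a : ℝ := Real.sqrt k₁ with ha
  set b : ℝ := Real.sqrt (m + k₂) with hb
  have ha0 : 0 < a := Real.sqrt_pos.mpr hk₁
  have hb0 : 0 < b := Real.sqrt_pos.mpr (by linarith)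
  have ha2 : a ^ 2 = k₁ := Real.sq_sqrt hk₁.le
  have hb2 : b ^ 2 = m + k₂ := Real.sq_sqrt (by linarith)
  have hcab : c < 2 * (a * b) := by
    have hc2 : c ^ 2 ≤ max ((1 - lamU) ^ 2) ((1 - lamL) ^ 2) := by
      rcases max_cases (|1 - lamU|) (|1 - lamL|) with ⟨h, _⟩ | ⟨h, _⟩ <;>
        rw [hc, h, sq_abs]
      · exact le_max_left _ _
      · exact le_max_right _ _
    have h4 : c ^ 2 < 4 * (a * b) ^ 2 := by
      have : (a * b) ^ 2 = k₁ * (m + k₂) := by rw [mul_pow, ha2, hb2]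
      nlinarith [hcond, hc2]
    nlinarith [mul_pos ha0 hb0, hc0]
  -- decompose the vector and conclude
  refine posDef_iff_dotProduct_mulVec.mpr ⟨?_, ?_⟩
  · show (-( (2⁻¹ : ℝ) • (J + Jᵀ)))ᴴ = _
    rw [conjTranspose_eq_transpose_of_trivial]
    simp [transpose_neg, transpose_smul, transpose_add, transpose_transpose, add_comm]
  · intro v hv
    have hvJ : star v ⬝ᵥ (-( (2⁻¹ : ℝ) • (J + Jᵀ))) *ᵥ v = -(v ⬝ᵥ J *ᵥ v) := by
      have hT : v ⬝ᵥ Jᵀ *ᵥ v = v ⬝ᵥ J *ᵥ v := by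
        rw [dotProduct_mulVec, vecMul_transpose, dotProduct_comm]
      simp only [star_trivial, neg_mulVec, smul_mulVec, add_mulVec, dotProduct_neg,
        dotProduct_smul, dotProduct_add, smul_eq_mul, hT]
      ring
    rw [hvJ]
    set x : Fin n → ℝ := v ∘ Sum.inl with hx
    set y : Fin n → ℝ := v ∘ Sum.inr with hy
    have hvdec : v = Sum.elim x y := by
      funext i; cases i <;> rfl
    have hquad : v ⬝ᵥ J *ᵥ v =
        -(k₁ * (x ⬝ᵥ x)) + x ⬝ᵥ y - y ⬝ᵥ H *ᵥ x - (m + k₂) * (y ⬝ᵥ y) := by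
      rw [hvdec, hJ, fromBlocks_mulVec, sumElim_dotProduct_sumElim]
      simp only [neg_mulVec, smul_mulVec, one_mulVec, dotProduct_add, dotProduct_neg,
        dotProduct_smul, smul_eq_mul, Sum.elim_comp_inl, Sum.elim_comp_inr]
      ring
    have hxx : 0 ≤ x ⬝ᵥ x := by simpa [star_trivial] using dotProduct_star_self_nonneg x
    have hyy : 0 ≤ y ⬝ᵥ y := by simpa [star_trivial] using dotProduct_star_self_nonneg y
    have hpos : 0 < x ⬝ᵥ x ∨ 0 < y ⬝ᵥ y := by
      by_contra hcon
      push_neg at hcon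
      have hx0 : x = 0 := dotProduct_self_eq_zero.mp (le_antisymm hcon.1 hxx)
      have hy0 : y = 0 := dotProduct_self_eq_zero.mp (le_antisymm hcon.2 hyy)
      apply hv
      rw [hvdec, hx0, hy0]
      funext i; cases i <;> rfl
    -- cross term bound with s = √(b/a)
    set s : ℝ := Real.sqrt (b / a) with hs
    have hs0 : 0 < s := Real.sqrt_pos.mpr (div_pos hb0 ha0)
    have hs2 : s ^ 2 = b / a := Real.sq_sqrt (div_pos hb0 ha0).le
    have hsi2 : s⁻¹ ^ 2 = a / b := by
      rw [inv_pow, hs2, inv_div]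
    have hcb := cross_bound' A hAsym c hq x y s hs0
    rw [hs2, hsi2] at hcb
    have hAyx : y ⬝ᵥ A *ᵥ x = y ⬝ᵥ H *ᵥ x - y ⬝ᵥ x := by
      simp [hAdef, sub_mulVec, dotProduct_sub, one_mulVec]
    have hxy : x ⬝ᵥ y = y ⬝ᵥ x := dotProduct_comm x y
    -- coefficients are positive
    have hcoef1' : c / 2 * (a / b) < k₁ := by
      rw [div_mul_div_comm, div_lt_iff₀ (by positivity)]
      nlinarith [mul_lt_mul_of_pos_right hcab ha0, ha2]
    have hcoef2' : c / 2 * (b / a) < m + k₂ := by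
      rw [div_mul_div_comm, div_lt_iff₀ (by positivity)]
      nlinarith [mul_lt_mul_of_pos_right hcab hb0, hb2]
    have hcoef1 : 0 < k₁ - c / 2 * (a / b) := by linarith
    have hcoef2 : 0 < (m + k₂) - c / 2 * (b / a) := by linarith
    rw [hquad]
    have key : 0 < k₁ * (x ⬝ᵥ x) + (m + k₂) * (y ⬝ᵥ y) + (y ⬝ᵥ A *ᵥ x) := by
      have hlow : -((c / 2) * (b / a * (y ⬝ᵥ y) + a / b * (x ⬝ᵥ x))) ≤ y ⬝ᵥ A *ᵥ x := hcb
      rcases hpos with h | h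
      · nlinarith [mul_le_mul_of_nonneg_right hcoef1.le hxx, mul_nonneg hcoef2.le hyy,
          mul_pos hcoef1 h]
      · nlinarith [mul_nonneg hcoef1.le hxx, mul_pos hcoef2 h]
    rw [hAyx] at key
    linarith [key, hxy.le, hxy.ge]
end

section
/- Consider the state-dependent coupled system ẋⁱ = -∇f(xⁱ) + ∑ⱼ kⱼ(t)(xʲ(t) - xⁱ) for i = 1,…,p, where kⱼ : ℝ → ℝ are continuous gains. If inf_t ∑ⱼ kⱼ(t) - sup_y λ_max(-∇²f(y)) = γ > 0, then any two solutions xⁱ, xˡ of the system satisfy ‖xⁱ(t) - xˡ(t)‖ ≤ e^{-γt}‖xⁱ(0) - xˡ(0)‖, i.e. the agents globally exponentially synchronize with rate γ. -/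
open scoped RealInnerProductSpace
open Finset

/-- State-dependent coupling: for the system
`ẋⁱ = -∇f(xⁱ) + ∑ⱼ kⱼ(t)(xʲ(t) - xⁱ)`, if
`inf_t ∑ⱼ kⱼ(t) - sup_y λ_max(-∇²f(y)) = γ > 0`, then any two agents
synchronize exponentially with rate `γ`. -/
theorem stmt_18 (n p : ℕ) (hp : 0 < p)
    (f : EuclideanSpace ℝ (Fin n) → ℝ) (hf : ContDiff ℝ 2 f)
    (k : Fin p → ℝ → ℝ) (hk : ∀ j, Continuous (k j))
    (Ksum Λ γ : ℝ)
    -- `Ksum` is a lower bound on the total gain `∑ⱼ kⱼ(t)`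
    (hKsum : ∀ t : ℝ, Ksum ≤ ∑ j : Fin p, k j t)
    -- `Λ` bounds `λ_max(-∇²f(y))` from above : `⟪v, ∇²f(y)v⟫ ≥ -Λ‖v‖²`
    (hΛ : ∀ y v : EuclideanSpace ℝ (Fin n),
      -Λ * ‖v‖ ^ 2 ≤ ⟪v, fderiv ℝ (gradient f) y v⟫)
    (hγ : γ = Ksum - Λ) (hγpos : 0 < γ)
    (x : Fin p → ℝ → EuclideanSpace ℝ (Fin n))
    (hx : ∀ (i : Fin p) (t : ℝ),
      HasDerivAt (x i)
        (-gradient f (x i t) + ∑ j : Fin p, k j t • (x j t - x i t)) t) :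
    ∀ (i l : Fin p) (t : ℝ), 0 ≤ t →
      ‖x i t - x l t‖ ≤ Real.exp (-γ * t) * ‖x i 0 - x l 0‖ := by
  -- differentiability of the gradient
  have hgd : Differentiable ℝ (gradient f) := by
    have h1 : ContDiff ℝ 1 (fderiv ℝ f) := hf.fderiv_right (by norm_num)
    exact ((InnerProductSpace.toDual ℝ _).symm.contDiff.comp h1).differentiable one_ne_zero
  -- monotonicity-type bound on the gradient from the Hessian bound
  have hmono : ∀ a b : EuclideanSpace ℝ (Fin n),
      -Λ * ‖a - b‖ ^ 2 ≤ ⟪a - b, gradient f a - gradient f b⟫ := by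
    intro a b
    set c := a - b with hc
    set φ : ℝ → ℝ := fun s => ⟪c, gradient f (b + s • c)⟫ + Λ * ‖c‖ ^ 2 * s with hφ
    have hφd : ∀ s : ℝ, HasDerivAt φ
        (⟪c, (fderiv ℝ (gradient f) (b + s • c)) c⟫ + Λ * ‖c‖ ^ 2) s := by
      intro s
      have hpath : HasDerivAt (fun s : ℝ => b + s • c) c s := by
        simpa using ((hasDerivAt_id s).smul_const c).const_add b
      have h1 : HasDerivAt (fun s : ℝ => gradient f (b + s • c))
          ((fderiv ℝ (gradient f) (b + s • c)) c) s :=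
        by have := (hgd (b + s • c)).hasFDerivAt.comp_hasDerivAt s hpath; exact this
      have h2 : HasDerivAt (fun s : ℝ => ⟪c, gradient f (b + s • c)⟫)
          ⟪c, (fderiv ℝ (gradient f) (b + s • c)) c⟫ s := by
        simpa using (hasDerivAt_const s c).inner ℝ h1
      refine (h2.add ((hasDerivAt_id s).const_mul (Λ * ‖c‖ ^ 2))).congr_deriv (by rw [mul_one])
    have hmon : Monotone φ := by
      apply monotone_of_deriv_nonneg (fun s => (hφd s).differentiableAt)
      intro s
      rw [(hφd s).deriv]
      have := hΛ (b + s • c) c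
      linarith
    have h01 : φ 0 ≤ φ 1 := hmon zero_le_one
    simp only [hφ, zero_smul, add_zero, one_smul, mul_zero, mul_one] at h01
    have hba : b + c = a := by rw [hc]; abel
    rw [hba] at h01
    rw [inner_sub_right]
    linarith
  intro i l t ht
  set e : ℝ → EuclideanSpace ℝ (Fin n) := fun t => x i t - x l t with he
  set K : ℝ → ℝ := fun t => ∑ j : Fin p, k j t with hK
  -- derivative of the error
  have hD : ∀ t : ℝ, HasDerivAt e
      (-(gradient f (x i t) - gradient f (x l t)) - K t • e t) t := by
    intro t
    have h := (hx i t).sub (hx l t)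
    refine h.congr_deriv ?_
    have hsum : (∑ j : Fin p, k j t • (x j t - x i t)) -
        (∑ j : Fin p, k j t • (x j t - x l t)) = K t • (x l t - x i t) := by
      rw [← Finset.sum_sub_distrib, hK, Finset.sum_smul]
      refine Finset.sum_congr rfl fun j _ => ?_
      rw [← smul_sub, sub_sub_sub_cancel_left]
    have : (-gradient f (x i t) + ∑ j : Fin p, k j t • (x j t - x i t)) -
        (-gradient f (x l t) + ∑ j : Fin p, k j t • (x j t - x l t)) =
        ((∑ j : Fin p, k j t • (x j t - x i t)) -
          (∑ j : Fin p, k j t • (x j t - x l t))) -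
        (gradient f (x i t) - gradient f (x l t)) := by abel
    rw [this, hsum, he]
    simp only [smul_sub]
    abel
  -- squared error
  set g : ℝ → ℝ := fun t => ⟪e t, e t⟫ with hg
  have hgnn : ∀ t, 0 ≤ g t := fun t => real_inner_self_nonneg
  have hgD : ∀ t : ℝ, HasDerivAt g
      (2 * ⟪e t, -(gradient f (x i t) - gradient f (x l t)) - K t • e t⟫) t := by
    intro t
    have := (hD t).inner ℝ (hD t)
    refine this.congr_deriv ?_
    rw [real_inner_comm]
    ring
  -- the Lyapunov-type function
  set h : ℝ → ℝ := fun t => Real.exp (2 * γ * t) * g t with hh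
  have hhD : ∀ t : ℝ, HasDerivAt h
      (2 * γ * Real.exp (2 * γ * t) * g t +
        Real.exp (2 * γ * t) *
          (2 * ⟪e t, -(gradient f (x i t) - gradient f (x l t)) - K t • e t⟫)) t := by
    intro t
    have h1 : HasDerivAt (fun t : ℝ => 2 * γ * t) (2 * γ) t := by
      simpa using (hasDerivAt_id t).const_mul (2 * γ)
    have hexp : HasDerivAt (fun t : ℝ => Real.exp (2 * γ * t))
        (Real.exp (2 * γ * t) * (2 * γ)) t := h1.exp
    refine (hexp.mul (hgD t)).congr_deriv ?_
    ring
  -- key inequality : ⟪e, ė⟫ ≤ -γ ‖e‖²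
  have hkey : ∀ t : ℝ,
      ⟪e t, -(gradient f (x i t) - gradient f (x l t)) - K t • e t⟫ ≤ -γ * g t := by
    intro t
    rw [inner_sub_right, inner_neg_right, real_inner_smul_right]
    have h1 : -Λ * ‖e t‖ ^ 2 ≤ ⟪e t, gradient f (x i t) - gradient f (x l t)⟫ := by
      simpa [he] using hmono (x i t) (x l t)
    have h2 : g t = ‖e t‖ ^ 2 := real_inner_self_eq_norm_sq (e t)
    have h3 : Ksum ≤ K t := hKsum t
    have h4 : (Ksum - K t) * g t ≤ 0 :=
      mul_nonpos_of_nonpos_of_nonneg (by linarith) (hgnn t)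
    have h5 : g t = ⟪e t, e t⟫ := rfl
    have h1' : -⟪e t, gradient f (x i t) - gradient f (x l t)⟫ ≤ Λ * g t := by
      rw [h2]; linarith
    have hγg : -γ * g t = Λ * g t - Ksum * g t := by rw [hγ]; ring
    rw [← h5]
    linarith
  -- h is antitone
  have hant : Antitone h := by
    apply antitone_of_deriv_nonpos (fun t => (hhD t).differentiableAt)
    intro t
    rw [(hhD t).deriv]
    have hE : (0:ℝ) < Real.exp (2 * γ * t) := Real.exp_pos _
    have := mul_le_mul_of_nonneg_left (hkey t) hE.le
    nlinarith
  have hht : h t ≤ h 0 := hant ht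
  simp only [hh, mul_zero, Real.exp_zero, one_mul] at hht
  -- convert back to norms
  have hE : (0:ℝ) < Real.exp (2 * γ * t) := Real.exp_pos _
  have hg0 : g 0 = ‖e 0‖ ^ 2 := real_inner_self_eq_norm_sq (e 0)
  have hgt2 : g t = ‖e t‖ ^ 2 := real_inner_self_eq_norm_sq (e t)
  have hexp2 : Real.exp (-(2 * γ * t)) = Real.exp (-γ * t) ^ 2 := by
    rw [sq, ← Real.exp_add]; ring_nf
  have hfin : ‖e t‖ ^ 2 ≤ (Real.exp (-γ * t) * ‖e 0‖) ^ 2 :=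
    calc ‖e t‖ ^ 2 = (Real.exp (2 * γ * t))⁻¹ * (Real.exp (2 * γ * t) * g t) := by
          rw [← hgt2]; field_simp
      _ ≤ (Real.exp (2 * γ * t))⁻¹ * g 0 :=
          mul_le_mul_of_nonneg_left hht (inv_nonneg.mpr hE.le)
      _ = (Real.exp (-γ * t) * ‖e 0‖) ^ 2 := by
          rw [← Real.exp_neg, hexp2, hg0, mul_pow]
  have := Real.sqrt_le_sqrt hfin
  rwa [Real.sqrt_sq (norm_nonneg _), Real.sqrt_sq (by positivity)] at this
end
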